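/- arXiv:2206.02908 — 6 statements merged into one kernel-verified Lean document; each statement's English description precedes it below -/
import Mathlib

section
/- Let E_min < E_max, let I₀ : [E_min, E_max] → [0,∞) be measurable, and let g₁, …, g_m : [E_min, E_max] → [0,∞) be measurable with C_i := ∫_{E_min}^{E_max} I₀(E) g_i(E) · max_{1≤j≤m} g_j(E) dE < ∞ for each i. Let (Σ, μ) be a measure space, let q ∈ [1, ∞), and let A, B : Σ → [0,∞)^m be measurable. Then for each i ∈ {1, …, m}: ( ∫_Σ | ∫_{E_min}^{E_max} I₀(E) g_i(E) ( exp(−Σ_{j=1}^m g_j(E) A_j(x)) − exp(−Σ_{j=1}^m g_j(E) B_j(x)) ) dE |^q dμ(x) )^{1/q} ≤ C_i · ( ∫_Σ ( Σ_{j=1}^m |A_j(x) − B_j(x)| )^q dμ(x) )^{1/q}. -/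
open MeasureTheory

lemma exp_neg_lip (a b : ℝ) (ha : 0 ≤ a) (hb : 0 ≤ b) :
    |Real.exp (-a) - Real.exp (-b)| ≤ |a - b| := by
  wlog h : b ≤ a generalizing a b
  · rw [abs_sub_comm, abs_sub_comm a b]; exact this b a hb ha (le_of_not_ge h)
  have h1 : Real.exp (-a) ≤ Real.exp (-b) := Real.exp_le_exp.2 (by linarith)
  rw [abs_of_nonpos (by linarith), abs_of_nonneg (by linarith)]
  have h2 : 1 - (a - b) ≤ Real.exp (-(a - b)) := by
    have := Real.add_one_le_exp (-(a - b)); linarith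
  have h3 : Real.exp (-a) = Real.exp (-b) * Real.exp (-(a - b)) := by
    rw [← Real.exp_add]; ring_nf
  have h4 : Real.exp (-b) ≤ 1 := Real.exp_le_one_iff.2 (by linarith)
  have h5 : Real.exp (-b) - Real.exp (-a) = Real.exp (-b) * (1 - Real.exp (-(a-b))) := by
    rw [h3]; ring
  nlinarith [Real.exp_pos (-b), Real.exp_le_one_iff.2 (show -(a-b) ≤ 0 by linarith)]

/-- `L^q` Lipschitz continuity of the energy-integrated intensity differences
with respect to the accumulated attenuation vectors `A` and `B`. -/
theorem stmt_3 (Emin Emax : ℝ) (hE : Emin < Emax) (m : ℕ) (hm : 1 ≤ m)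
    (I₀ : ℝ → ℝ) (hI₀meas : Measurable I₀) (hI₀nonneg : ∀ E, 0 ≤ I₀ E)
    (g : Fin m → ℝ → ℝ) (hgmeas : ∀ i, Measurable (g i)) (hgnonneg : ∀ i E, 0 ≤ g i E)
    (C : Fin m → ℝ)
    (hC : ∀ i, C i = ∫ E in Set.Icc Emin Emax, I₀ E * g i E * ⨆ j, g j E)
    (hCint : ∀ i, IntegrableOn (fun E => I₀ E * g i E * ⨆ j, g j E) (Set.Icc Emin Emax))
    {X : Type*} [MeasurableSpace X] (μ : Measure X) (q : ℝ) (hq : 1 ≤ q)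
    (A B : X → Fin m → ℝ)
    (hAmeas : ∀ j, Measurable fun x => A x j) (hBmeas : ∀ j, Measurable fun x => B x j)
    (hAnonneg : ∀ x j, 0 ≤ A x j) (hBnonneg : ∀ x j, 0 ≤ B x j) (i : Fin m) :
    (∫⁻ x, ENNReal.ofReal
        (|∫ E in Set.Icc Emin Emax, I₀ E * g i E *
            (Real.exp (-(∑ j, g j E * A x j)) - Real.exp (-(∑ j, g j E * B x j)))|) ^ q ∂μ)
        ^ (1 / q)
      ≤ ENNReal.ofReal (C i) *
        (∫⁻ x, ENNReal.ofReal (∑ j, |A x j - B x j|) ^ q ∂μ) ^ (1 / q) := by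
  have hq0 : 0 < q := lt_of_lt_of_le one_pos hq
  have hne : Nonempty (Fin m) := Fin.pos_iff_nonempty.mp (by omega)
  have hbdd : ∀ E, BddAbove (Set.range fun j => g j E) := fun E =>
    Set.Finite.bddAbove (Set.finite_range _)
  have hsupnn : ∀ E, 0 ≤ ⨆ j, g j E := fun E =>
    le_trans (hgnonneg i E) (le_ciSup (hbdd E) i)
  have hCnn : 0 ≤ C i := by
    rw [hC]
    exact integral_nonneg fun E => mul_nonneg (mul_nonneg (hI₀nonneg E) (hgnonneg i E)) (hsupnn E)
  -- pointwise bound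
  have key : ∀ x, |∫ E in Set.Icc Emin Emax, I₀ E * g i E *
      (Real.exp (-(∑ j, g j E * A x j)) - Real.exp (-(∑ j, g j E * B x j)))|
      ≤ C i * ∑ j, |A x j - B x j| := by
    intro x
    set S : ℝ := ∑ j, |A x j - B x j| with hSdef
    have hSnn : 0 ≤ S := Finset.sum_nonneg fun _ _ => abs_nonneg _
    have hb : IntegrableOn (fun E => (I₀ E * g i E * ⨆ j, g j E) * S)
        (Set.Icc Emin Emax) := (hCint i).mul_const S
    have step : ∀ E, ‖I₀ E * g i E *
        (Real.exp (-(∑ j, g j E * A x j)) - Real.exp (-(∑ j, g j E * B x j)))‖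
        ≤ (I₀ E * g i E * ⨆ j, g j E) * S := by
      intro E
      rw [Real.norm_eq_abs, abs_mul, abs_of_nonneg (mul_nonneg (hI₀nonneg E) (hgnonneg i E))]
      have hA : 0 ≤ ∑ j, g j E * A x j :=
        Finset.sum_nonneg fun j _ => mul_nonneg (hgnonneg j E) (hAnonneg x j)
      have hB : 0 ≤ ∑ j, g j E * B x j :=
        Finset.sum_nonneg fun j _ => mul_nonneg (hgnonneg j E) (hBnonneg x j)
      have h1 : |Real.exp (-(∑ j, g j E * A x j)) - Real.exp (-(∑ j, g j E * B x j))|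
          ≤ |(∑ j, g j E * A x j) - ∑ j, g j E * B x j| := exp_neg_lip _ _ hA hB
      have h2 : |(∑ j, g j E * A x j) - ∑ j, g j E * B x j| ≤ (⨆ j, g j E) * S := by
        rw [← Finset.sum_sub_distrib]
        calc |∑ j, (g j E * A x j - g j E * B x j)|
            ≤ ∑ j, |g j E * A x j - g j E * B x j| := Finset.abs_sum_le_sum_abs _ _
          _ = ∑ j, g j E * |A x j - B x j| := by
              refine Finset.sum_congr rfl fun j _ => ?_
              rw [← mul_sub, abs_mul, abs_of_nonneg (hgnonneg j E)]
          _ ≤ ∑ j, (⨆ k, g k E) * |A x j - B x j| := by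
              refine Finset.sum_le_sum fun j _ => ?_
              exact mul_le_mul_of_nonneg_right (le_ciSup (hbdd E) j) (abs_nonneg _)
          _ = (⨆ j, g j E) * S := by rw [Finset.mul_sum]
      calc I₀ E * g i E * |Real.exp (-(∑ j, g j E * A x j)) - Real.exp (-(∑ j, g j E * B x j))|
          ≤ I₀ E * g i E * ((⨆ j, g j E) * S) :=
            mul_le_mul_of_nonneg_left (h1.trans h2) (mul_nonneg (hI₀nonneg E) (hgnonneg i E))
        _ = (I₀ E * g i E * ⨆ j, g j E) * S := by ring
    calc |∫ E in Set.Icc Emin Emax, I₀ E * g i E *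
          (Real.exp (-(∑ j, g j E * A x j)) - Real.exp (-(∑ j, g j E * B x j)))|
        ≤ ∫ E in Set.Icc Emin Emax, (I₀ E * g i E * ⨆ j, g j E) * S :=
          norm_integral_le_of_norm_le hb (Filter.Eventually.of_forall step)
      _ = C i * S := by rw [integral_mul_const, hC, mul_comm]
  -- lift to L^q
  have hmono : (∫⁻ x, ENNReal.ofReal
        (|∫ E in Set.Icc Emin Emax, I₀ E * g i E *
            (Real.exp (-(∑ j, g j E * A x j)) - Real.exp (-(∑ j, g j E * B x j)))|) ^ q ∂μ)
      ≤ ∫⁻ x, ENNReal.ofReal (C i) ^ q * ENNReal.ofReal (∑ j, |A x j - B x j|) ^ q ∂μ := by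
    refine lintegral_mono fun x => ?_
    rw [← ENNReal.mul_rpow_of_nonneg _ _ hq0.le, ← ENNReal.ofReal_mul hCnn]
    exact ENNReal.rpow_le_rpow (ENNReal.ofReal_le_ofReal (key x)) hq0.le
  calc (∫⁻ x, ENNReal.ofReal
        (|∫ E in Set.Icc Emin Emax, I₀ E * g i E *
            (Real.exp (-(∑ j, g j E * A x j)) - Real.exp (-(∑ j, g j E * B x j)))|) ^ q ∂μ)
        ^ (1 / q)
      ≤ (∫⁻ x, ENNReal.ofReal (C i) ^ q *
          ENNReal.ofReal (∑ j, |A x j - B x j|) ^ q ∂μ) ^ (1 / q) :=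
        ENNReal.rpow_le_rpow hmono (by positivity)
    _ = (ENNReal.ofReal (C i) ^ q *
          ∫⁻ x, ENNReal.ofReal (∑ j, |A x j - B x j|) ^ q ∂μ) ^ (1 / q) := by
        rw [lintegral_const_mul' _ _ (ENNReal.rpow_ne_top_of_nonneg hq0.le ENNReal.ofReal_ne_top)]
    _ = ENNReal.ofReal (C i) *
        (∫⁻ x, ENNReal.ofReal (∑ j, |A x j - B x j|) ^ q ∂μ) ^ (1 / q) := by
        rw [ENNReal.mul_rpow_of_nonneg _ _ (by positivity : (0:ℝ) ≤ 1/q),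
          ← ENNReal.rpow_mul, mul_one_div_cancel hq0.ne', ENNReal.rpow_one]
end

section
/- Let E_min < E_max, let ν denote Lebesgue measure on (E_min, E_max), let I : (E_min, E_max) → (0,∞) be integrable with ∫ I dν > 0, let f ∈ ℝ and σ > 0. For measurable integrable y : (E_min, E_max) → [0,∞) define Φ(y) = (1/(2σ²)) · ( f − ∫ y dν )² + ∫ d_KL(y(E), I(E)) dν(E) ∈ [0,∞]. Let Y* be the unique positive solution of Y · exp(Y/σ²) = ( ∫ I dν ) · exp(f/σ²), and set y* = I · exp((f − Y*)/σ²). Then: (i) ∫ y* dν = Y*; (ii) Φ(y*) < ∞; (iii) Φ(y*) ≤ Φ(y) for every measurable integrable y : (E_min, E_max) → [0,∞); and (iv) if Φ(y) = Φ(y*) for such a y, then y = y* ν-almost everywhere. -/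
open MeasureTheory

set_option maxHeartbeats 1000000

/-- Kullback–Leibler divergence `d_KL(z,w) = z log(z/w) − z + w`. -/
noncomputable def KLdiv (z w : ℝ) : ℝ := z * Real.log (z / w) - z + w

lemma kl_nonneg {z w : ℝ} (hz : 0 ≤ z) (hw : 0 < w) : 0 ≤ KLdiv z w := by
  rcases eq_or_lt_of_le hz with h | h
  · simp [KLdiv, ← h]; positivity
  · have hlog : Real.log (w / z) ≤ w / z - 1 := Real.log_le_sub_one_of_pos (by positivity)
    have h1 : Real.log (w / z) = Real.log w - Real.log z := Real.log_div hw.ne' h.ne'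
    have h2 : Real.log (z / w) = Real.log z - Real.log w := Real.log_div h.ne' hw.ne'
    have h3 : z * Real.log (w / z) ≤ w - z := by
      have := mul_le_mul_of_nonneg_left hlog h.le
      calc z * Real.log (w / z) ≤ z * (w / z - 1) := this
        _ = w - z := by field_simp
    simp only [KLdiv, h2]
    rw [h1] at h3
    nlinarith
  
lemma kl_pos {z w : ℝ} (hz : 0 ≤ z) (hw : 0 < w) (hne : z ≠ w) : 0 < KLdiv z w := by
  rcases eq_or_lt_of_le hz with h | h
  · simp [KLdiv, ← h]; exact hw
  · have hratio : w / z ≠ 1 := by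
      intro habs
      exact hne (by field_simp at habs; linarith)
    have hlog : Real.log (w / z) < w / z - 1 := Real.log_lt_sub_one_of_pos (by positivity) hratio
    have h1 : Real.log (w / z) = Real.log w - Real.log z := Real.log_div hw.ne' h.ne'
    have h2 : Real.log (z / w) = Real.log z - Real.log w := Real.log_div h.ne' hw.ne'
    have h3 : z * Real.log (w / z) < w - z := by
      have := mul_lt_mul_of_pos_left hlog h
      calc z * Real.log (w / z) < z * (w / z - 1) := this
        _ = w - z := by field_simp
    simp only [KLdiv, h2]
    rw [h1] at h3
    nlinarith

lemma kl_eq_zero {z w : ℝ} (hz : 0 ≤ z) (hw : 0 < w) (h : KLdiv z w = 0) : z = w := by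
  by_contra hne
  exact absurd h (kl_pos hz hw hne).ne'

lemma kl_identity {z w c : ℝ} (hz : 0 ≤ z) (hw : 0 < w) (hc : 0 < c) :
    KLdiv z w = KLdiv (w * c) w + Real.log c * (z - w * c) + KLdiv z (w * c) := by
  have hwc : (0:ℝ) < w * c := mul_pos hw hc
  have hwcw : w * c / w = c := by field_simp
  have hlogwc : Real.log (w * c / w) = Real.log c := by rw [hwcw]
  rcases eq_or_lt_of_le hz with h | h
  · simp only [KLdiv, ← h]
    simp [hlogwc]; ring
  · have h1 : Real.log (z / (w * c)) = Real.log z - Real.log w - Real.log c := by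
      rw [Real.log_div h.ne' hwc.ne', Real.log_mul hw.ne' hc.ne']; ring
    have h2 : Real.log (z / w) = Real.log z - Real.log w := Real.log_div h.ne' hw.ne'
    simp only [KLdiv, h1, h2, hlogwc]
    ring

lemma kl_scale {w c : ℝ} (hw : 0 < w) (hc : 0 < c) :
    KLdiv (w * c) w = w * KLdiv c 1 := by
  have hwcw : w * c / w = c := by field_simp
  have hlogwc : Real.log (w * c / w) = Real.log c := by rw [hwcw]
  simp only [KLdiv, hlogwc, div_one]
  ring


/-- Per-ray data fidelity of the variational CT model: Gaussian term for the
total intensity plus Kullback–Leibler term against the expected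
energy-resolved intensity `I`, on the energy interval `(Emin, Emax)`. -/
noncomputable def PhiFun (Emin Emax σ f : ℝ) (I y : ℝ → ℝ) : ENNReal :=
  ENNReal.ofReal ((1 / (2 * σ ^ 2)) * (f - ∫ E in Set.Ioo Emin Emax, y E) ^ 2)
    + ∫⁻ E in Set.Ioo Emin Emax, ENNReal.ofReal (KLdiv (y E) (I E))

/-- The minimizing photon count: `y* = I · exp((f − Y*)/σ²)` with `Y*` the
unique positive solution of `Y exp(Y/σ²) = (∫ I) exp(f/σ²)` is the unique
minimizer of the per-ray data fidelity `Φ`, and `∫ y* = Y*`. -/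
theorem stmt_6 (Emin Emax : ℝ) (hE : Emin < Emax)
    (I : ℝ → ℝ) (hImeas : Measurable I)
    (hIint : IntegrableOn I (Set.Ioo Emin Emax))
    (hIpos : ∀ E ∈ Set.Ioo Emin Emax, 0 < I E)
    (hIintpos : 0 < ∫ E in Set.Ioo Emin Emax, I E)
    (f σ : ℝ) (hσ : 0 < σ)
    (Ystar : ℝ) (hYpos : 0 < Ystar)
    (hYeq : Ystar * Real.exp (Ystar / σ ^ 2)
      = (∫ E in Set.Ioo Emin Emax, I E) * Real.exp (f / σ ^ 2)) :
    (∫ E in Set.Ioo Emin Emax, I E * Real.exp ((f - Ystar) / σ ^ 2)) = Ystar ∧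
    PhiFun Emin Emax σ f I (fun E => I E * Real.exp ((f - Ystar) / σ ^ 2)) < ⊤ ∧
    (∀ y : ℝ → ℝ, Measurable y → IntegrableOn y (Set.Ioo Emin Emax) →
      (∀ E, 0 ≤ y E) →
      PhiFun Emin Emax σ f I (fun E => I E * Real.exp ((f - Ystar) / σ ^ 2))
        ≤ PhiFun Emin Emax σ f I y) ∧
    (∀ y : ℝ → ℝ, Measurable y → IntegrableOn y (Set.Ioo Emin Emax) →
      (∀ E, 0 ≤ y E) →
      PhiFun Emin Emax σ f I y
        = PhiFun Emin Emax σ f I (fun E => I E * Real.exp ((f - Ystar) / σ ^ 2)) →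
      ∀ᵐ E ∂(volume.restrict (Set.Ioo Emin Emax)),
        y E = I E * Real.exp ((f - Ystar) / σ ^ 2)) := by
  have hSmeas : MeasurableSet (Set.Ioo Emin Emax) := measurableSet_Ioo
  set S := Set.Ioo Emin Emax with hS
  have hσ2 : (0:ℝ) < σ ^ 2 := by positivity
  set c := Real.exp ((f - Ystar) / σ ^ 2) with hcdef
  have hc : 0 < c := Real.exp_pos _
  set Ir := ∫ E in S, I E with hIr
  -- (i)
  have hIrc : Ir * c = Ystar := by
    have hepos : (0:ℝ) < Real.exp (Ystar / σ ^ 2) := Real.exp_pos _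
    have he : Real.exp (f / σ ^ 2) = c * Real.exp (Ystar / σ ^ 2) := by
      rw [hcdef, ← Real.exp_add]; ring_nf
    have h2 : Ystar * Real.exp (Ystar / σ ^ 2) = (Ir * c) * Real.exp (Ystar / σ ^ 2) := by
      rw [hYeq, he]; ring
    exact (mul_right_cancel₀ hepos.ne' h2).symm
  have hint_star : (∫ E in S, I E * c) = Ystar := by
    rw [integral_mul_const]; exact hIrc
  -- KL at y*
  set K := KLdiv c 1 with hKdef
  have hK : 0 ≤ K := kl_nonneg hc.le one_pos
  have hKLstar_eq : ∀ E ∈ S, KLdiv (I E * c) (I E) = I E * K := by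
    intro E hE
    rw [hKdef, ← kl_scale (hIpos E hE) hc]
  have hystar_int : IntegrableOn (fun E => I E * c) S := hIint.mul_const c
  have hKLstar_int : IntegrableOn (fun E => KLdiv (I E * c) (I E)) S := by
    refine (hIint.mul_const K).congr ?_
    exact (ae_restrict_iff' hSmeas).2 (ae_of_all _ fun E hE => (hKLstar_eq E hE).symm)
  have hKLstar_nonneg : 0 ≤ᵐ[volume.restrict S] fun E => KLdiv (I E * c) (I E) :=
    (ae_restrict_iff' hSmeas).2 (ae_of_all _ fun E hE =>
      kl_nonneg (mul_nonneg (hIpos E hE).le hc.le) (hIpos E hE))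
  have hKLstar_val : (∫ E in S, KLdiv (I E * c) (I E)) = Ir * K := by
    rw [setIntegral_congr_fun hSmeas (fun E hE => hKLstar_eq E hE), integral_mul_const]
  have hLstar : (∫⁻ E in S, ENNReal.ofReal (KLdiv (I E * c) (I E)))
      = ENNReal.ofReal (Ir * K) := by
    rw [← ofReal_integral_eq_lintegral_ofReal hKLstar_int hKLstar_nonneg, hKLstar_val]
  have hPhiStar : PhiFun Emin Emax σ f I (fun E => I E * c)
      = ENNReal.ofReal ((1 / (2 * σ ^ 2)) * (f - Ystar) ^ 2) + ENNReal.ofReal (Ir * K) := by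
    rw [PhiFun, ← hS, hint_star, hLstar]
  -- master claim
  have key : ∀ y : ℝ → ℝ, Measurable y → IntegrableOn y S → (∀ E, 0 ≤ y E) →
      PhiFun Emin Emax σ f I (fun E => I E * c) ≤ PhiFun Emin Emax σ f I y ∧
      (PhiFun Emin Emax σ f I y = PhiFun Emin Emax σ f I (fun E => I E * c) →
        ∀ᵐ E ∂(volume.restrict S), y E = I E * c) := by
    intro y hy hyint hynn
    by_cases hL : (∫⁻ E in S, ENNReal.ofReal (KLdiv (y E) (I E))) = ⊤
    · have hPhiTop : PhiFun Emin Emax σ f I y = ⊤ := by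
        rw [PhiFun, ← hS, hL]; simp
      constructor
      · rw [hPhiTop]; exact le_top
      · intro heq
        rw [hPhiTop, hPhiStar] at heq
        exact absurd heq.symm
          (ENNReal.add_ne_top.2 ⟨ENNReal.ofReal_ne_top, ENNReal.ofReal_ne_top⟩)
    · -- finite KL case
      have hKLmeas : Measurable fun E => KLdiv (y E) (I E) := by
        simp only [KLdiv]
        exact ((hy.mul ((hy.div hImeas).log)).sub hy).add hImeas
      have hKLnn : 0 ≤ᵐ[volume.restrict S] fun E => KLdiv (y E) (I E) :=
        (ae_restrict_iff' hSmeas).2 (ae_of_all _ fun E hE => kl_nonneg (hynn E) (hIpos E hE))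
      have hKLint : IntegrableOn (fun E => KLdiv (y E) (I E)) S := by
        refine ⟨hKLmeas.aestronglyMeasurable, ?_⟩
        rw [hasFiniteIntegral_iff_ofReal hKLnn]
        exact lt_top_iff_ne_top.2 hL
      set A := ∫ E in S, KLdiv (y E) (I E) with hAdef
      have hA0 : 0 ≤ A := integral_nonneg_of_ae hKLnn
      have hLA : (∫⁻ E in S, ENNReal.ofReal (KLdiv (y E) (I E))) = ENNReal.ofReal A := by
        rw [← ofReal_integral_eq_lintegral_ofReal hKLint hKLnn]
      set Y := ∫ E in S, y E with hYdef
      -- identity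
      have hident : ∀ E ∈ S, KLdiv (y E) (I E)
          = KLdiv (I E * c) (I E) + Real.log c * (y E - I E * c) + KLdiv (y E) (I E * c) :=
        fun E hE => kl_identity (hynn E) (hIpos E hE) hc
      have hdiff_int : IntegrableOn (fun E => y E - I E * c) S := by
        exact hyint.sub hystar_int
      have hmid_int : IntegrableOn (fun E => Real.log c * (y E - I E * c)) S :=
        hdiff_int.const_mul (Real.log c)
      have hgint : IntegrableOn (fun E => KLdiv (y E) (I E * c)) S := by
        have hbig : IntegrableOn
            (fun E => KLdiv (y E) (I E) - KLdiv (I E * c) (I E)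
              - Real.log c * (y E - I E * c)) S := by
          exact (hKLint.sub hKLstar_int).sub hmid_int
        refine hbig.congr ?_
        refine (ae_restrict_iff' hSmeas).2 (ae_of_all _ fun E hE => ?_)
        have := hident E hE
        simp only
        linarith [this]
      set B := ∫ E in S, KLdiv (y E) (I E * c) with hBdef
      have hgnn : 0 ≤ᵐ[volume.restrict S] fun E => KLdiv (y E) (I E * c) :=
        (ae_restrict_iff' hSmeas).2 (ae_of_all _ fun E hE =>
          kl_nonneg (hynn E) (mul_pos (hIpos E hE) hc))
      have hB0 : 0 ≤ B := integral_nonneg_of_ae hgnn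
      have hsum1_int : IntegrableOn
          (fun E => KLdiv (I E * c) (I E) + Real.log c * (y E - I E * c)) S := by
        exact hKLstar_int.add hmid_int
      have hA_eq : A = Ir * K + Real.log c * (Y - Ystar) + B := by
        have h1 : A = ∫ E in S, (KLdiv (I E * c) (I E)
            + Real.log c * (y E - I E * c) + KLdiv (y E) (I E * c)) := by
          rw [hAdef]
          exact setIntegral_congr_fun hSmeas (fun E hE => hident E hE)
        have e1 : (∫ E in S, (KLdiv (I E * c) (I E)
            + Real.log c * (y E - I E * c) + KLdiv (y E) (I E * c)))
            = (∫ E in S, (KLdiv (I E * c) (I E) + Real.log c * (y E - I E * c)))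
              + ∫ E in S, KLdiv (y E) (I E * c) := integral_add hsum1_int hgint
        have e2 : (∫ E in S, (KLdiv (I E * c) (I E) + Real.log c * (y E - I E * c)))
            = (∫ E in S, KLdiv (I E * c) (I E))
              + ∫ E in S, Real.log c * (y E - I E * c) := integral_add hKLstar_int hmid_int
        have e3 : (∫ E in S, Real.log c * (y E - I E * c))
            = Real.log c * (Y - Ystar) := by
          rw [MeasureTheory.integral_const_mul, integral_sub hyint hystar_int, hint_star, ← hYdef]
        rw [h1, e1, e2, e3, hKLstar_val, ← hBdef]
      have hlogc : Real.log c = (f - Ystar) / σ ^ 2 := Real.log_exp _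
      set P := (1 / (2 * σ ^ 2)) * (f - Y) ^ 2 + A with hPdef
      set Pstar := (1 / (2 * σ ^ 2)) * (f - Ystar) ^ 2 + Ir * K with hPstardef
      have hPstar0 : 0 ≤ Pstar := by
        have : 0 ≤ Ir * K := mul_nonneg hIintpos.le hK
        positivity
      have hPP : P - Pstar = (Y - Ystar) ^ 2 / (2 * σ ^ 2) + B := by
        rw [hPdef, hPstardef, hA_eq, hlogc]
        field_simp
        ring
      have hdivnn : 0 ≤ (Y - Ystar) ^ 2 / (2 * σ ^ 2) := by positivity
      have hPle : Pstar ≤ P := by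
        clear_value P Pstar A Y B
        linarith [hPP, hB0, hdivnn]
      have hPhiY : PhiFun Emin Emax σ f I y = ENNReal.ofReal P := by
        rw [PhiFun, ← hS, hLA, ← ENNReal.ofReal_add (by positivity) hA0, ← hYdef]
      have hPhiS : PhiFun Emin Emax σ f I (fun E => I E * c) = ENNReal.ofReal Pstar := by
        rw [hPhiStar, ← ENNReal.ofReal_add (by positivity) (mul_nonneg hIintpos.le hK)]
      constructor
      · rw [hPhiY, hPhiS]; exact ENNReal.ofReal_le_ofReal hPle
      · intro heq
        rw [hPhiY, hPhiS] at heq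
        have hPeq : P = Pstar :=
          (ENNReal.ofReal_eq_ofReal_iff (le_trans hPstar0 hPle) hPstar0).1 heq
        have hBzero : B = 0 := by
          clear_value P Pstar A Y B
          linarith [hPP, hB0, hdivnn, hPeq]
        have hgzero : (fun E => KLdiv (y E) (I E * c)) =ᵐ[volume.restrict S] 0 := by
          rw [← integral_eq_zero_iff_of_nonneg_ae hgnn hgint]
          exact hBzero
        filter_upwards [hgzero, ae_restrict_mem hSmeas] with E h1 h2
        exact kl_eq_zero (hynn E) (mul_pos (hIpos E h2) hc) h1
  refine ⟨hint_star, ?_, fun y h1 h2 h3 => (key y h1 h2 h3).1,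
    fun y h1 h2 h3 => (key y h1 h2 h3).2⟩
  rw [hPhiStar]
  exact ENNReal.add_lt_top.2 ⟨ENNReal.ofReal_lt_top, ENNReal.ofReal_lt_top⟩
end

section
/- Let E_min < E_max, let I₀ : [E_min, E_max] → [0,∞) be integrable, let g = (g₁, …, g_m) : [E_min, E_max] → [0,∞)^m be bounded and measurable, and let y : [E_min, E_max] → [0,∞) be measurable with ∫ y(E) g_i(E) dE < ∞ for each i. Define L : ℝ^m → ℝ by L(x) = ∫_{E_min}^{E_max} ( y(E) · ⟨g(E), x⟩ + I₀(E) · exp(−⟨g(E), x⟩) ) dE, and let G be the m×m matrix G_{ij} = ∫_{E_min}^{E_max} I₀(E) g_i(E) g_j(E) dE. Then L is differentiable on ℝ^m with gradient ∇L(x) = ∫_{E_min}^{E_max} ( y(E) − I₀(E)·exp(−⟨g(E), x⟩) ) g(E) dE, and for all u, v ∈ [0,∞)^m (componentwise nonnegative) one has L(v) − L(u) − ⟨∇L(u), v − u⟩ ≤ (1/2) (v − u)ᵀ G (v − u). -/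
/-!
Only the exponential part of `L` needs analysis: its linear part `x ↦ ∫ y ⟨g, x⟩` is its own
derivative. Since `g` is bounded, the `x`-derivative `-I₀ e^{-⟨g, x⟩} g` of the exponential
integrand is dominated near any point by a multiple of the integrable `I₀`, so the integral can be
differentiated under the integral sign. For the quadratic bound the linear part cancels, and as
`t ↦ e^{-t}` has second derivative `e^{-t} ≤ 1` on `[0, ∞)`,
`e^{-b} ≤ e^{-a} - e^{-a} (b - a) + (b - a)² / 2` for `a, b ≥ 0`. Taking `a = ⟨g(E), u⟩` and
`b = ⟨g(E), v⟩`, multiplying by `I₀(E) ≥ 0` and integrating gives the bound.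
-/

open MeasureTheory Set

theorem ConvexOn.add_mul_sub_le_of_hasDerivAt {S : Set ℝ} {f : ℝ → ℝ} {f' x y : ℝ}
    (hf : ConvexOn ℝ S f) (hx : x ∈ S) (hy : y ∈ S) (hf' : HasDerivAt f f' x) :
    f x + f' * (y - x) ≤ f y := by
  rcases lt_trichotomy x y with hxy | rfl | hxy
  · have h := hf.le_slope_of_hasDerivAt hx hy hxy hf'
    rw [slope_def_field, le_div_iff₀ (sub_pos.2 hxy)] at h
    linarith
  · simp
  · have h := hf.slope_le_of_hasDerivAt hy hx hxy hf'
    rw [slope_def_field, div_le_iff₀ (sub_pos.2 hxy)] at h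
    linarith

theorem Real.exp_neg_le_tangent_add_sq_div_two {a b : ℝ} (ha : 0 ≤ a) (hb : 0 ≤ b) :
    Real.exp (-b) ≤ Real.exp (-a) - Real.exp (-a) * (b - a) + (b - a) ^ 2 / 2 := by
  have hexp : ∀ t : ℝ, HasDerivAt (fun t => Real.exp (-t)) (-Real.exp (-t)) t := fun t => by
    simpa using (hasDerivAt_neg t).exp
  have hf' : ∀ t : ℝ, HasDerivAt (fun t => t ^ 2 / 2 - Real.exp (-t)) (t + Real.exp (-t)) t :=
    fun t => by simpa using ((hasDerivAt_pow 2 t).div_const 2).fun_sub (hexp t)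
  have hf'' : ∀ t : ℝ, HasDerivAt (fun t => t + Real.exp (-t)) (1 - Real.exp (-t)) t :=
    fun t => by simpa [sub_eq_add_neg] using (hasDerivAt_id' t).fun_add (hexp t)
  have hconvex : ConvexOn ℝ (Ici 0) (fun t : ℝ => t ^ 2 / 2 - Real.exp (-t)) := by
    refine convexOn_of_hasDerivWithinAt2_nonneg (convex_Ici 0) (by fun_prop)
      (fun t _ => (hf' t).hasDerivWithinAt) (fun t _ => (hf'' t).hasDerivWithinAt) fun t ht => ?_
    rw [interior_Ici] at ht
    exact sub_nonneg.2 (Real.exp_le_one_iff.2 (neg_nonpos.2 (le_of_lt ht)))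
  linear_combination hconvex.add_mul_sub_le_of_hasDerivAt ha hb (hf' a)

section KullbackLeibler

variable {α V : Type*} [MeasurableSpace α] {μ : Measure α} [NormedAddCommGroup V]
  [NormedSpace ℝ V]

theorem ContinuousLinearMap.exp_neg_apply_le (ℓ : V →L[ℝ] ℝ) {x : V} {C R : ℝ} (hℓ : ‖ℓ‖ ≤ C)
    (hx : ‖x‖ ≤ R) : Real.exp (-(ℓ x)) ≤ Real.exp (C * R) :=
  Real.exp_le_exp.2 <| (neg_le_abs _).trans <| (ℓ.le_opNorm x).trans <|
    mul_le_mul_of_nonneg hℓ hx (norm_nonneg _) ((norm_nonneg _).trans hx)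

variable {ℓ : α → V →L[ℝ] ℝ} {w y : α → ℝ} {C : ℝ}

theorem integrable_mul_exp_neg_apply (hw : Integrable w μ) (hℓ : AEStronglyMeasurable ℓ μ)
    (hC : ∀ E, ‖ℓ E‖ ≤ C) (x : V) : Integrable (fun E => w E * Real.exp (-(ℓ E x))) μ :=
  hw.mul_bdd (Real.continuous_exp.comp_aestronglyMeasurable (hℓ.apply_continuousLinearMap x).neg)
    (ae_of_all _ fun E => by
      rw [Real.norm_of_nonneg (Real.exp_pos _).le]
      exact (ℓ E).exp_neg_apply_le (hC E) le_rfl)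

theorem integrable_mul_exp_neg_apply_smul (hw : Integrable w μ) (hℓ : AEStronglyMeasurable ℓ μ)
    (hC : ∀ E, ‖ℓ E‖ ≤ C) (x : V) :
    Integrable (fun E => (w E * Real.exp (-(ℓ E x))) • ℓ E) μ :=
  (integrable_mul_exp_neg_apply hw hℓ hC x).smul_bdd C hℓ (ae_of_all _ hC)

theorem hasFDerivAt_integral_mul_exp_neg_apply (hw : Integrable w μ)
    (hℓ : AEStronglyMeasurable ℓ μ) (hC : ∀ E, ‖ℓ E‖ ≤ C) (x : V) :
    HasFDerivAt (fun x => ∫ E, w E * Real.exp (-(ℓ E x)) ∂μ)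
      (-∫ E, (w E * Real.exp (-(ℓ E x))) • ℓ E ∂μ) x := by
  have hbound : ∀ E, ∀ x' ∈ Metric.ball x 1,
      ‖-((w E * Real.exp (-(ℓ E x'))) • ℓ E)‖ ≤ ‖w E‖ * Real.exp (C * (‖x‖ + 1)) * C := by
    intro E x' hx'
    have hx'x : ‖x'‖ ≤ ‖x‖ + 1 :=
      (norm_le_norm_add_norm_sub' x' x).trans (by linarith [mem_ball_iff_norm.1 hx'])
    rw [norm_neg, norm_smul, norm_mul, Real.norm_of_nonneg (Real.exp_pos _).le]
    gcongr ‖w E‖ * ?_ * ?_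
    · exact (ℓ E).exp_neg_apply_le (hC E) hx'x
    · exact hC E
  have hderiv : ∀ E, ∀ x' : V, HasFDerivAt (fun x => w E * Real.exp (-(ℓ E x)))
      (-((w E * Real.exp (-(ℓ E x'))) • ℓ E)) x' := by
    intro E x'
    exact ((ℓ E).hasFDerivAt.neg.exp.const_mul (w E)).congr_fderiv
      (by rw [smul_smul, smul_neg, Pi.neg_apply])
  rw [← integral_neg]
  exact hasFDerivAt_integral_of_dominated_of_fderiv_le (Metric.ball_mem_nhds x one_pos)
    (Filter.Eventually.of_forall fun x =>
      (integrable_mul_exp_neg_apply hw hℓ hC x).aestronglyMeasurable)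
    (integrable_mul_exp_neg_apply hw hℓ hC x)
    (integrable_mul_exp_neg_apply_smul hw hℓ hC x).aestronglyMeasurable.neg
    (ae_of_all _ hbound) ((hw.norm.mul_const _).mul_const _)
    (ae_of_all _ fun E x' _ => hderiv E x')

theorem integral_mul_exp_neg_apply_le (hw₀ : ∀ E, 0 ≤ w E) (hw : Integrable w μ)
    (hℓ : AEStronglyMeasurable ℓ μ) (hC : ∀ E, ‖ℓ E‖ ≤ C) {u v : V} (hu : ∀ E, 0 ≤ ℓ E u)
    (hv : ∀ E, 0 ≤ ℓ E v) :
    ∫ E, w E * Real.exp (-(ℓ E v)) ∂μ ≤ ∫ E, w E * Real.exp (-(ℓ E u)) ∂μ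
      - ∫ E, w E * Real.exp (-(ℓ E u)) * ℓ E (v - u) ∂μ
      + 1 / 2 * ∫ E, w E * ℓ E (v - u) ^ 2 ∂μ := by
  have hlin : Integrable (fun E => w E * Real.exp (-(ℓ E u)) * ℓ E (v - u)) μ :=
    (integrable_mul_exp_neg_apply_smul hw hℓ hC u).apply_continuousLinearMap (v - u)
  have hquad : Integrable (fun E => w E * ℓ E (v - u) ^ 2) μ :=
    hw.mul_bdd ((hℓ.apply_continuousLinearMap (v - u)).pow 2) (ae_of_all _ fun E => by
      rw [norm_pow]
      exact pow_le_pow_left₀ (norm_nonneg _)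
        (((ℓ E).le_opNorm _).trans (mul_le_mul_of_nonneg_right (hC E) (norm_nonneg _))) 2)
  have hpointwise : ∀ E, w E * Real.exp (-(ℓ E v)) ≤ w E * Real.exp (-(ℓ E u))
      - w E * Real.exp (-(ℓ E u)) * ℓ E (v - u) + 1 / 2 * (w E * ℓ E (v - u) ^ 2) := by
    intro E
    rw [map_sub]
    linear_combination mul_le_mul_of_nonneg_left
      (Real.exp_neg_le_tangent_add_sq_div_two (hu E) (hv E)) (hw₀ E)
  have hexp := integrable_mul_exp_neg_apply hw hℓ hC u
  rw [← integral_sub hexp hlin, ← integral_const_mul, ← integral_add (hexp.sub' hlin)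
    (hquad.const_mul _)]
  exact integral_mono (integrable_mul_exp_neg_apply hw hℓ hC v)
    ((hexp.sub' hlin).fun_add (hquad.const_mul _)) hpointwise

/-- The paper's data fidelity `L`, with `ℓ E x` in the role of `⟨g(E), x⟩` and `w` of `I₀`. -/
noncomputable def klFidelity (μ : Measure α) (y w : α → ℝ) (ℓ : α → V →L[ℝ] ℝ) (x : V) : ℝ :=
  ∫ E, (y E * ℓ E x + w E * Real.exp (-(ℓ E x))) ∂μ

noncomputable def klGradient (μ : Measure α) (y w : α → ℝ) (ℓ : α → V →L[ℝ] ℝ) (x : V) :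
    V →L[ℝ] ℝ :=
  ∫ E, (y E - w E * Real.exp (-(ℓ E x))) • ℓ E ∂μ

variable (hyℓ : Integrable (fun E => y E • ℓ E) μ) (hw : Integrable w μ)
  (hℓ : AEStronglyMeasurable ℓ μ) (hC : ∀ E, ‖ℓ E‖ ≤ C)
include hyℓ hw hℓ hC

theorem klFidelity_eq (x : V) :
    klFidelity μ y w ℓ x = (∫ E, y E • ℓ E ∂μ) x + ∫ E, w E * Real.exp (-(ℓ E x)) ∂μ := by
  have hyℓx : Integrable (fun E => y E * ℓ E x) μ := hyℓ.apply_continuousLinearMap x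
  rw [klFidelity, integral_add hyℓx (integrable_mul_exp_neg_apply hw hℓ hC x),
    ContinuousLinearMap.integral_apply hyℓ]
  rfl

theorem klGradient_eq (x : V) :
    klGradient μ y w ℓ x
      = ∫ E, y E • ℓ E ∂μ - ∫ E, (w E * Real.exp (-(ℓ E x))) • ℓ E ∂μ := by
  rw [klGradient, ← integral_sub hyℓ (integrable_mul_exp_neg_apply_smul hw hℓ hC x)]
  congr with E : 1
  exact sub_smul (y E) _ (ℓ E)

theorem hasFDerivAt_klFidelity (x : V) :
    HasFDerivAt (klFidelity μ y w ℓ) (klGradient μ y w ℓ x) x := by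
  rw [funext (klFidelity_eq hyℓ hw hℓ hC), klGradient_eq hyℓ hw hℓ hC, sub_eq_add_neg]
  exact (∫ E, y E • ℓ E ∂μ).hasFDerivAt.add
    (hasFDerivAt_integral_mul_exp_neg_apply hw hℓ hC x)

theorem klFidelity_sub_sub_klGradient_le (hw₀ : ∀ E, 0 ≤ w E) {u v : V}
    (hu : ∀ E, 0 ≤ ℓ E u) (hv : ∀ E, 0 ≤ ℓ E v) :
    klFidelity μ y w ℓ v - klFidelity μ y w ℓ u - klGradient μ y w ℓ u (v - u)
      ≤ 1 / 2 * ∫ E, w E * ℓ E (v - u) ^ 2 ∂μ := by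
  have h := integral_mul_exp_neg_apply_le hw₀ hw hℓ hC hu hv
  rw [klFidelity_eq hyℓ hw hℓ hC, klFidelity_eq hyℓ hw hℓ hC, klGradient_eq hyℓ hw hℓ hC,
    sub_apply, map_sub,
    ContinuousLinearMap.integral_apply (integrable_mul_exp_neg_apply_smul hw hℓ hC u)]
  simp only [smul_apply, smul_eq_mul]
  linarith

end KullbackLeibler

section Coordinates

variable {α ι : Type*} [MeasurableSpace α] {μ : Measure α} [Fintype ι]

noncomputable def dotProductCLM : (ι → ℝ) →L[ℝ] (ι → ℝ) →L[ℝ] ℝ :=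
  LinearMap.toContinuousLinearMap
    (LinearMap.toContinuousLinearMap.toLinearMap ∘ₗ dotProductBilin ℝ ℝ)

theorem dotProductCLM_apply (c x : ι → ℝ) : dotProductCLM c x = c ⬝ᵥ x := rfl

variable {G : α → ι → ℝ}

theorem MeasureTheory.Integrable.mul_apply_of_norm_le {f : α → ℝ} {C : ℝ} (hf : Integrable f μ)
    (hG : AEStronglyMeasurable G μ) (hGC : ∀ E, ‖G E‖ ≤ C) (i : ι) :
    Integrable (fun E => f E * G E i) μ :=
  hf.mul_bdd ((continuous_apply i).comp_aestronglyMeasurable hG)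
    (ae_of_all _ fun E => (norm_le_pi_norm (G E) i).trans (hGC E))

theorem integrable_smul_dotProductCLM {c : α → ℝ}
    (hc : ∀ i, Integrable (fun E => c E * G E i) μ) :
    Integrable (fun E => c E • dotProductCLM (G E)) μ := by
  simp_rw [← map_smul]
  exact dotProductCLM.integrable_comp (Integrable.of_eval hc)

theorem integral_smul_dotProductCLM_apply {c : α → ℝ}
    (hc : ∀ i, Integrable (fun E => c E * G E i) μ) (v : ι → ℝ) :
    (∫ E, c E • dotProductCLM (G E) ∂μ) v = ∑ i, (∫ E, c E * G E i ∂μ) * v i := by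
  have hcG : Integrable (fun E => c E • G E) μ := Integrable.of_eval hc
  simp_rw [← map_smul]
  rw [ContinuousLinearMap.integral_comp_comm _ hcG, dotProductCLM_apply, dotProduct]
  exact Finset.sum_congr rfl fun i _ => congrArg (· * v i) (eval_integral hc i)

theorem integral_mul_dotProductCLM_sq {w : α → ℝ}
    (hw : ∀ i j, Integrable (fun E => w E * G E i * G E j) μ) (d : ι → ℝ) :
    ∫ E, w E * dotProductCLM (G E) d ^ 2 ∂μ
      = ∑ i, ∑ j, d i * (∫ E, w E * G E i * G E j ∂μ) * d j := by
  have hexpand : ∀ E, w E * dotProductCLM (G E) d ^ 2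
      = ∑ i, ∑ j, d i * (w E * G E i * G E j) * d j := fun E => by
    rw [dotProductCLM_apply, dotProduct, sq, Finset.sum_mul_sum, Finset.mul_sum]
    refine Finset.sum_congr rfl fun i _ => ?_
    rw [Finset.mul_sum]
    refine Finset.sum_congr rfl fun j _ => ?_
    ring
  have hterm : ∀ i j, Integrable (fun E => d i * (w E * G E i * G E j) * d j) μ :=
    fun i j => ((hw i j).const_mul _).mul_const _
  simp_rw [hexpand]
  rw [integral_finsetSum _ fun i _ => integrable_finsetSum _ fun j _ => hterm i j]
  refine Finset.sum_congr rfl fun i _ => ?_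
  rw [integral_finsetSum _ fun j _ => hterm i j]
  simp_rw [integral_mul_const, integral_const_mul]

end Coordinates

theorem stmt_9_general (Emin Emax : ℝ) (m : ℕ)
    (I₀ : ℝ → ℝ) (hI₀nonneg : ∀ E, 0 ≤ I₀ E)
    (hI₀int : IntegrableOn I₀ (Set.Icc Emin Emax))
    (g : Fin m → ℝ → ℝ) (hgmeas : ∀ i, Measurable (g i)) (hgnonneg : ∀ i E, 0 ≤ g i E)
    (hgbdd : ∃ Cg : ℝ, ∀ i E, g i E ≤ Cg)
    (y : ℝ → ℝ)
    (hyint : ∀ i, IntegrableOn (fun E => y E * g i E) (Set.Icc Emin Emax)) :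
    (∀ x : Fin m → ℝ, ∃ D : (Fin m → ℝ) →L[ℝ] ℝ,
      HasFDerivAt (fun x' : Fin m → ℝ => ∫ E in Set.Icc Emin Emax,
          (y E * ∑ i, g i E * x' i + I₀ E * Real.exp (-(∑ i, g i E * x' i)))) D x ∧
      ∀ v : Fin m → ℝ, D v = ∑ i, (∫ E in Set.Icc Emin Emax,
          (y E - I₀ E * Real.exp (-(∑ j, g j E * x j))) * g i E) * v i) ∧
    (∀ u v : Fin m → ℝ, (∀ i, 0 ≤ u i) → (∀ i, 0 ≤ v i) →
      (∫ E in Set.Icc Emin Emax,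
          (y E * ∑ i, g i E * v i + I₀ E * Real.exp (-(∑ i, g i E * v i))))
        - (∫ E in Set.Icc Emin Emax,
            (y E * ∑ i, g i E * u i + I₀ E * Real.exp (-(∑ i, g i E * u i))))
        - ∑ i, (∫ E in Set.Icc Emin Emax,
            (y E - I₀ E * Real.exp (-(∑ j, g j E * u j))) * g i E) * (v i - u i)
      ≤ (1 / 2) * ∑ i, ∑ j,
          (v i - u i) * (∫ E in Set.Icc Emin Emax, I₀ E * g i E * g j E) * (v j - u j)) := by
  obtain ⟨Cg, hCg⟩ := hgbdd
  set μ := volume.restrict (Icc Emin Emax)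
  set G : ℝ → Fin m → ℝ := fun E i => g i E
  have hG : AEStronglyMeasurable G μ := (measurable_pi_lambda G hgmeas).aestronglyMeasurable
  have hGC : ∀ E, ‖G E‖ ≤ max Cg 0 := fun E =>
    (pi_norm_le_iff_of_nonneg (le_max_right _ _)).2 fun i => by
      rw [Real.norm_of_nonneg (hgnonneg i E)]
      exact (hCg i E).trans (le_max_left _ _)
  set ℓ : ℝ → (Fin m → ℝ) →L[ℝ] ℝ := fun E => dotProductCLM (G E)
  have hℓ : AEStronglyMeasurable ℓ μ := dotProductCLM.continuous.comp_aestronglyMeasurable hG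
  have hℓC : ∀ E, ‖ℓ E‖ ≤ ‖(dotProductCLM : (Fin m → ℝ) →L[ℝ] _)‖ * max Cg 0 := fun E =>
    (dotProductCLM.le_opNorm _).trans (mul_le_mul_of_nonneg_left (hGC E) (norm_nonneg _))
  have hyℓ : Integrable (fun E => y E • ℓ E) μ := integrable_smul_dotProductCLM hyint
  have hgrad : ∀ x v, klGradient μ y I₀ ℓ x v
      = ∑ i, (∫ E, (y E - I₀ E * Real.exp (-(∑ j, g j E * x j))) * g i E ∂μ) * v i :=
    fun x v => integral_smul_dotProductCLM_apply (fun i => by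
      simpa only [sub_mul] using (hyint i).sub'
        ((integrable_mul_exp_neg_apply hI₀int hℓ hℓC x).mul_apply_of_norm_le hG hGC i)) v
  refine ⟨fun x => ⟨klGradient μ y I₀ ℓ x, hasFDerivAt_klFidelity hyℓ hI₀int hℓ hℓC x, hgrad x⟩,
    fun u v hu hv => ?_⟩
  have hquad : ∫ E, I₀ E * ℓ E (v - u) ^ 2 ∂μ
      = ∑ i, ∑ j, (v i - u i) * (∫ E, I₀ E * g i E * g j E ∂μ) * (v j - u j) :=
    integral_mul_dotProductCLM_sq (fun i j =>
      ((hI₀int.mul_apply_of_norm_le hG hGC i).mul_apply_of_norm_le hG hGC j)) (v - u)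
  have hcone : ∀ x : Fin m → ℝ, (∀ i, 0 ≤ x i) → ∀ E, 0 ≤ ℓ E x := fun x hx E =>
    dotProduct_nonneg_of_nonneg (fun i => hgnonneg i E) hx
  have h := klFidelity_sub_sub_klGradient_le hyℓ hI₀int hℓ hℓC hI₀nonneg (hcone u hu) (hcone v hv)
  rw [hgrad, hquad] at h
  exact h

/-- The Kullback–Leibler data fidelity
`L(x) = ∫ (y(E) ⟨g(E),x⟩ + I₀(E) exp(−⟨g(E),x⟩)) dE` is differentiable with
gradient `∫ (y(E) − I₀(E) exp(−⟨g(E),x⟩)) g(E) dE`, and on the nonnegative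
orthant its Bregman remainder is bounded by the quadratic form of the matrix
`G_{ij} = ∫ I₀ gᵢ gⱼ`. -/
theorem stmt_9 (Emin Emax : ℝ) (hE : Emin < Emax) (m : ℕ) (hm : 1 ≤ m)
    (I₀ : ℝ → ℝ) (hI₀meas : Measurable I₀) (hI₀nonneg : ∀ E, 0 ≤ I₀ E)
    (hI₀int : IntegrableOn I₀ (Set.Icc Emin Emax))
    (g : Fin m → ℝ → ℝ) (hgmeas : ∀ i, Measurable (g i)) (hgnonneg : ∀ i E, 0 ≤ g i E)
    (hgbdd : ∃ Cg : ℝ, ∀ i E, g i E ≤ Cg)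
    (y : ℝ → ℝ) (hymeas : Measurable y) (hynonneg : ∀ E, 0 ≤ y E)
    (hyint : ∀ i, IntegrableOn (fun E => y E * g i E) (Set.Icc Emin Emax)) :
    (∀ x : Fin m → ℝ, ∃ D : (Fin m → ℝ) →L[ℝ] ℝ,
      HasFDerivAt (fun x' : Fin m → ℝ => ∫ E in Set.Icc Emin Emax,
          (y E * ∑ i, g i E * x' i + I₀ E * Real.exp (-(∑ i, g i E * x' i)))) D x ∧
      ∀ v : Fin m → ℝ, D v = ∑ i, (∫ E in Set.Icc Emin Emax,
          (y E - I₀ E * Real.exp (-(∑ j, g j E * x j))) * g i E) * v i) ∧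
    (∀ u v : Fin m → ℝ, (∀ i, 0 ≤ u i) → (∀ i, 0 ≤ v i) →
      (∫ E in Set.Icc Emin Emax,
          (y E * ∑ i, g i E * v i + I₀ E * Real.exp (-(∑ i, g i E * v i))))
        - (∫ E in Set.Icc Emin Emax,
            (y E * ∑ i, g i E * u i + I₀ E * Real.exp (-(∑ i, g i E * u i))))
        - ∑ i, (∫ E in Set.Icc Emin Emax,
            (y E - I₀ E * Real.exp (-(∑ j, g j E * u j))) * g i E) * (v i - u i)
      ≤ (1 / 2) * ∑ i, ∑ j,
          (v i - u i) * (∫ E in Set.Icc Emin Emax, I₀ E * g i E * g j E) * (v j - u j)) :=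
  stmt_9_general Emin Emax m I₀ hI₀nonneg hI₀int g hgmeas hgnonneg hgbdd y hyint
end

section
/- Let m ≥ 1, let A be a symmetric positive definite m×m real matrix, and let f : ℝ^m → ℝ ∪ {+∞} be proper, convex, and lower semicontinuous, with Legendre–Fenchel conjugate f*(p) = sup_{w ∈ ℝ^m} ( ⟨p, w⟩ − f(w) ). Then for every v ∈ ℝ^m the problems min_w { (1/2) (w − v)ᵀ A (w − v) + f(w) } and min_w { (1/2) (w − A v)ᵀ A^{−1} (w − A v) + f*(w) } each possess a unique minimizer, denoted p and q respectively, and these satisfy the generalized Moreau identity v = p + A^{−1} q. -/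
/-!
The primal objective `Φ w = ½ (w - v)ᵀ A (w - v) + f w` is lower semicontinuous, and it is coercive
because a proper convex lower semicontinuous `f` is bounded below by `C - M ‖w - w₀‖`; hence it
attains its minimum at some `p`. Strong convexity of the quadratic part gives quadratic growth
`Φ p + ½ (w - p)ᵀ A (w - p) ≤ Φ w` around any minimizer, which yields uniqueness as well as the
subgradient inequality `f p + ⟨A (v - p), w - p⟩ ≤ f w`. The latter says `f* q = ⟨q, p⟩ - f p` for
`q = A (v - p)`, while Fenchel–Young gives `⟨z, p⟩ - f p ≤ f* z` for every `z`. Since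
`A⁻¹ (q - A v) = -p`, completing the square in the dual objective turns its quadratic part into
`-⟨z, p⟩` plus a nonnegative term, so `q` is the dual minimizer; it is unique because `f*` is
convex and never `⊥`. Finally `A⁻¹ q = v - p`.
-/

open Matrix

/-- Legendre–Fenchel conjugate of an extended-real-valued function on `ℝ^m`. -/
noncomputable def fenchelConj {m : ℕ} (f : (Fin m → ℝ) → EReal) (p : Fin m → ℝ) : EReal :=
  ⨆ w : Fin m → ℝ, (((p ⬝ᵥ w : ℝ) : EReal) - f w)

open Filter Topology

namespace Matrix

variable {ι : Type*} [Fintype ι]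

variable {A : Matrix ι ι ℝ}

theorem IsHermitian.dotProduct_mulVec_comm (hA : A.IsHermitian) (x y : ι → ℝ) :
    x ⬝ᵥ A *ᵥ y = y ⬝ᵥ A *ᵥ x := by
  rw [dotProduct_mulVec, ← mulVec_transpose, ← conjTranspose_eq_transpose_of_trivial, hA.eq,
    dotProduct_comm]

theorem IsHermitian.add_dotProduct_mulVec_add (hA : A.IsHermitian) (x y : ι → ℝ) :
    (x + y) ⬝ᵥ A *ᵥ (x + y) = x ⬝ᵥ A *ᵥ x + 2 * (x ⬝ᵥ A *ᵥ y) + y ⬝ᵥ A *ᵥ y := by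
  rw [mulVec_add, dotProduct_add, add_dotProduct, add_dotProduct, hA.dotProduct_mulVec_comm y x]
  ring

theorem IsHermitian.convexComb_dotProduct_mulVec (hA : A.IsHermitian) (x y : ι → ℝ) (t : ℝ) :
    (t • x + (1 - t) • y) ⬝ᵥ A *ᵥ (t • x + (1 - t) • y) =
      t * (x ⬝ᵥ A *ᵥ x) + (1 - t) * (y ⬝ᵥ A *ᵥ y) - t * (1 - t) * ((x - y) ⬝ᵥ A *ᵥ (x - y)) := by
  simp only [mulVec_add, mulVec_sub, mulVec_smul, dotProduct_add, add_dotProduct, sub_dotProduct,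
    dotProduct_sub, smul_dotProduct, dotProduct_smul, smul_eq_mul, hA.dotProduct_mulVec_comm y x]
  ring

theorem PosDef.exists_pos_mul_norm_sq_le (hA : A.PosDef) :
    ∃ μ : ℝ, 0 < μ ∧ ∀ x : ι → ℝ, μ * ‖x‖ ^ 2 ≤ x ⬝ᵥ A *ᵥ x := by
  obtain ⟨μ, hμ, hsphere⟩ := (isCompact_sphere (0 : ι → ℝ) 1).exists_forall_le'
    (f := fun x => x ⬝ᵥ A *ᵥ x) (by fun_prop) fun x hx =>
      by simpa using hA.dotProduct_mulVec_pos (ne_zero_of_mem_sphere one_ne_zero ⟨x, hx⟩)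
  refine ⟨μ, hμ, fun x => ?_⟩
  rcases eq_or_ne x 0 with rfl | hx
  · simp
  have hx' : 0 < ‖x‖ := norm_pos_iff.mpr hx
  have hunit := hsphere (‖x‖⁻¹ • x) (by simp [norm_smul, hx'.ne'])
  simp only [mulVec_smul, dotProduct_smul, smul_dotProduct, smul_eq_mul] at hunit
  calc μ * ‖x‖ ^ 2 ≤ ‖x‖⁻¹ * (‖x‖⁻¹ * (x ⬝ᵥ A *ᵥ x)) * ‖x‖ ^ 2 := by gcongr
    _ = x ⬝ᵥ A *ᵥ x := by field_simp

end Matrix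

theorem le_of_forall_le_add_mul {x y c : ℝ} (h : ∀ t : ℝ, 0 < t → t ≤ 1 → x ≤ y + t * c) :
    x ≤ y := by
  have hlim : Tendsto (fun t : ℝ => y + t * c) (𝓝[>] 0) (𝓝 y) :=
    ((continuous_const.add (continuous_id.mul continuous_const)).tendsto' 0 y
      (by simp)).mono_left nhdsWithin_le_nhds
  refine ge_of_tendsto hlim ?_
  filter_upwards [Ioc_mem_nhdsGT one_pos] with t ht using h t ht.1 ht.2

theorem LowerSemicontinuous.exists_forall_le' {X β : Type*} [TopologicalSpace X] [LinearOrder β]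
    {f : X → β} (hf : LowerSemicontinuous f) (x₀ : X) (h : ∀ᶠ x in cocompact X, f x₀ ≤ f x) :
    ∃ x, ∀ y, f x ≤ f y := by
  obtain ⟨K, hK, hKf⟩ := hasBasis_cocompact.eventually_iff.mp h
  obtain ⟨x, -, hx⟩ := (hf.lowerSemicontinuousOn _).exists_isMinOn (Set.insert_nonempty x₀ K)
    (hK.insert x₀)
  refine ⟨x, fun y => ?_⟩
  by_cases hy : y ∈ K
  exacts [hx (Set.mem_insert_of_mem _ hy), (hx (Set.mem_insert x₀ K)).trans (hKf hy)]

section EConvex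

variable {E : Type*} [AddCommGroup E] [Module ℝ E]

/-- `ConvexOn ℝ univ` does not apply here, `EReal` not being an `ℝ`-module. -/
def EConvex (f : E → EReal) : Prop :=
  ∀ w₁ w₂ : E, ∀ t : ℝ, 0 ≤ t → t ≤ 1 →
    f (t • w₁ + (1 - t) • w₂) ≤ (t : EReal) * f w₁ + ((1 - t : ℝ) : EReal) * f w₂

theorem EConvex.le_coe {f : E → EReal} (hf : EConvex f) {w₁ w₂ : E} {a b : ℝ}
    (h₁ : f w₁ = a) (h₂ : f w₂ = b) {t : ℝ} (ht₀ : 0 ≤ t) (ht₁ : t ≤ 1) :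
    f (t • w₁ + (1 - t) • w₂) ≤ ((t * a + (1 - t) * b : ℝ) : EReal) := by
  simpa [h₁, h₂, EReal.coe_mul, EReal.coe_add] using hf w₁ w₂ t ht₀ ht₁

end EConvex

section Normed

variable {E : Type*} [NormedAddCommGroup E] [NormedSpace ℝ E]

theorem EConvex.coe_le_of_forall_closedBall {f : E → EReal} (hf : EConvex f)
    (hbot : ∀ w, f w ≠ ⊥) {w₀ : E} {r β : ℝ} (hw₀ : f w₀ = r)
    (hball : ∀ x ∈ Metric.closedBall w₀ 1, (β : EReal) ≤ f x) (w : E) :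
    ((min β r - |β - r| * ‖w - w₀‖ : ℝ) : EReal) ≤ f w := by
  induction hw : f w using EReal.rec with
  | bot => exact absurd hw (hbot w)
  | top => exact le_top
  | coe c =>
  rw [EReal.coe_le_coe_iff]
  rcases le_or_gt ‖w - w₀‖ 1 with hnear | hfar
  · have hβc : β ≤ c := EReal.coe_le_coe_iff.mp
      (hw ▸ hball w (by rwa [Metric.mem_closedBall, dist_eq_norm]))
    nlinarith [min_le_left β r, abs_nonneg (β - r), norm_nonneg (w - w₀)]
  · -- The point of `[w₀, w]` at distance `1` from `w₀` lies in the ball.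
    set s := ‖w - w₀‖
    have hs : 0 < s := one_pos.trans hfar
    have hmem : s⁻¹ • w + (1 - s⁻¹) • w₀ ∈ Metric.closedBall w₀ 1 := by
      rw [Metric.mem_closedBall, dist_eq_norm,
        show s⁻¹ • w + (1 - s⁻¹) • w₀ - w₀ = s⁻¹ • (w - w₀) by module, norm_smul,
        Real.norm_eq_abs, abs_of_pos (inv_pos.mpr hs), inv_mul_cancel₀ hs.ne']
    have hβ : β ≤ s⁻¹ * c + (1 - s⁻¹) * r := EReal.coe_le_coe_iff.mp ((hball _ hmem).trans
      (hf.le_coe hw hw₀ (inv_nonneg.mpr hs.le) (inv_le_one_of_one_le₀ hfar.le)))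
    have key : s * β ≤ c + (s - 1) * r := by
      have hsβ := mul_le_mul_of_nonneg_left hβ hs.le
      field_simp at hsβ
      linarith
    nlinarith [min_le_right β r, neg_abs_le (β - r)]

theorem EConvex.exists_sub_mul_norm_le [ProperSpace E] {f : E → EReal} (hf : EConvex f)
    (hbot : ∀ w, f w ≠ ⊥) (hlsc : LowerSemicontinuous f) {w₀ : E} (hw₀ : f w₀ ≠ ⊤) :
    ∃ C M : ℝ, 0 ≤ M ∧ ∀ w, ((C - M * ‖w - w₀‖ : ℝ) : EReal) ≤ f w := by
  obtain ⟨x, hx, hmin⟩ := (hlsc.lowerSemicontinuousOn _).exists_isMinOn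
    ⟨w₀, Metric.mem_closedBall_self zero_le_one⟩ (isCompact_closedBall w₀ 1)
  have hxtop : f x ≠ ⊤ := ne_top_of_le_ne_top hw₀ (hmin (Metric.mem_closedBall_self zero_le_one))
  lift f x to ℝ using ⟨hxtop, hbot x⟩ with β hβ
  lift f w₀ to ℝ using ⟨hw₀, hbot w₀⟩ with r hr
  exact ⟨_, _, abs_nonneg _, hf.coe_le_of_forall_closedBall hbot hr.symm (fun y hy => hβ ▸ hmin hy)⟩

end Normed

section FenchelConj

variable {m : ℕ} {f : (Fin m → ℝ) → EReal}

theorem le_fenchelConj (z w : Fin m → ℝ) : ((z ⬝ᵥ w : ℝ) : EReal) - f w ≤ fenchelConj f z :=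
  le_iSup (fun w => ((z ⬝ᵥ w : ℝ) : EReal) - f w) w

theorem fenchelConj_ne_bot {w₀ : Fin m → ℝ} {c : ℝ} (hw₀ : f w₀ = c) (z : Fin m → ℝ) :
    fenchelConj f z ≠ ⊥ :=
  ne_bot_of_le_ne_bot (EReal.coe_ne_bot (z ⬝ᵥ w₀ - c))
    (by simpa [hw₀] using le_fenchelConj (f := f) z w₀)

theorem econvex_fenchelConj (hbot : ∀ w, f w ≠ ⊥) : EConvex (fenchelConj f) := by
  intro z₁ z₂ t ht₀ ht₁
  refine iSup_le fun w => ?_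
  induction hw : f w using EReal.rec with
  | bot => exact absurd hw (hbot w)
  | top => simp
  | coe c =>
    have h₁ := le_fenchelConj (f := f) z₁ w
    have h₂ := le_fenchelConj (f := f) z₂ w
    rw [hw, ← EReal.coe_sub] at h₁ h₂
    calc (((t • z₁ + (1 - t) • z₂) ⬝ᵥ w : ℝ) : EReal) - c
        = (t : EReal) * ((z₁ ⬝ᵥ w - c : ℝ) : EReal)
          + ((1 - t : ℝ) : EReal) * ((z₂ ⬝ᵥ w - c : ℝ) : EReal) := by
          norm_cast
          simp only [add_dotProduct, smul_dotProduct, smul_eq_mul]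
          ring
      _ ≤ _ := add_le_add (mul_le_mul_of_nonneg_left h₁ (EReal.coe_nonneg.mpr ht₀))
          (mul_le_mul_of_nonneg_left h₂ (EReal.coe_nonneg.mpr (sub_nonneg.mpr ht₁)))

theorem fenchelConj_eq_of_subgradient {p q : Fin m → ℝ} {a : ℝ} (hp : f p = a)
    (hsub : ∀ w, ((a + q ⬝ᵥ (w - p) : ℝ) : EReal) ≤ f w) :
    fenchelConj f q = ((q ⬝ᵥ p - a : ℝ) : EReal) := by
  refine le_antisymm (iSup_le fun w => ?_) (by simpa [hp] using le_fenchelConj (f := f) q p)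
  induction hw : f w using EReal.rec with
  | bot => exact absurd (le_bot_iff.mp (hw ▸ hsub w)) (EReal.coe_ne_bot _)
  | top => simp
  | coe c =>
    have h := hsub w
    rw [hw, EReal.coe_le_coe_iff, dotProduct_sub] at h
    rw [← EReal.coe_sub, EReal.coe_le_coe_iff]
    linarith

end FenchelConj

section ProxObjective

variable {ι : Type*} [Fintype ι]

noncomputable def proxObjective (A : Matrix ι ι ℝ) (g : (ι → ℝ) → EReal) (u w : ι → ℝ) : EReal :=
  ((1 / 2 * ((w - u) ⬝ᵥ A *ᵥ (w - u)) : ℝ) : EReal) + g w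

variable {A : Matrix ι ι ℝ} {g : (ι → ℝ) → EReal} {u p : ι → ℝ}

theorem LowerSemicontinuous.proxObjective (hg : LowerSemicontinuous g) :
    LowerSemicontinuous (proxObjective A g u) :=
  LowerSemicontinuous.add' (continuous_coe_real_ereal.comp (by fun_prop)).lowerSemicontinuous hg
    fun _ => EReal.continuousAt_add (.inl (EReal.coe_ne_top _)) (.inl (EReal.coe_ne_bot _))

theorem eventually_le_proxObjective (hA : A.PosDef) {C M : ℝ} (hM : 0 ≤ M) {a : ι → ℝ}
    (hlb : ∀ w, ((C - M * ‖w - a‖ : ℝ) : EReal) ≤ g w) (u : ι → ℝ) (c : ℝ) :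
    ∀ᶠ w in cocompact (ι → ℝ), (c : EReal) ≤ proxObjective A g u w := by
  obtain ⟨μ, hμ, hquad⟩ := hA.exists_pos_mul_norm_sq_le
  have hφ : Tendsto (fun s => s * (μ / 2 * s - M) + (C - M * ‖u - a‖)) atTop atTop :=
    tendsto_atTop_add_const_right _ _ (tendsto_id.atTop_mul_atTop₀
      (tendsto_atTop_add_const_right _ _ (tendsto_id.const_mul_atTop (half_pos hμ))))
  have hnorm : Tendsto (fun w : ι → ℝ => ‖w - u‖) (cocompact _) atTop :=
    tendsto_norm_cocompact_atTop.comp (Homeomorph.subRight u).map_cocompact.le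
  filter_upwards [hnorm.eventually (hφ.eventually_ge_atTop c)] with w hw
  have hdist := mul_le_mul_of_nonneg_left (norm_sub_le_norm_sub_add_norm_sub w u a) hM
  have hgrowth := hquad (w - u)
  refine le_trans ?_ (add_le_add le_rfl (hlb w))
  rw [← EReal.coe_add, EReal.coe_le_coe_iff]
  nlinarith

theorem exists_forall_proxObjective_le (hA : A.PosDef) (hg : LowerSemicontinuous g)
    {C M : ℝ} (hM : 0 ≤ M) {a : ι → ℝ} (hlb : ∀ w, ((C - M * ‖w - a‖ : ℝ) : EReal) ≤ g w)
    {w₀ : ι → ℝ} (hw₀ : g w₀ ≠ ⊤) (u : ι → ℝ) :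
    ∃ p, ∀ w, proxObjective A g u p ≤ proxObjective A g u w :=
  hg.proxObjective.exists_forall_le' w₀ <|
    (eventually_le_proxObjective hA hM hlb u _).mono fun _ hw =>
      (EReal.le_coe_toReal (EReal.add_ne_top (EReal.coe_ne_top _) hw₀)).trans hw

theorem ne_top_of_forall_proxObjective_le (hp : ∀ w, proxObjective A g u p ≤ proxObjective A g u w)
    {w₀ : ι → ℝ} (hw₀ : g w₀ ≠ ⊤) : g p ≠ ⊤ := by
  intro htop
  have hle := hp w₀
  simp only [proxObjective, htop, EReal.coe_add_top, top_le_iff] at hle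
  exact EReal.add_ne_top (EReal.coe_ne_top _) hw₀ hle

theorem proxObjective_add_le (hA : A.IsHermitian) (hg : EConvex g) (hbot : ∀ w, g w ≠ ⊥)
    (hp : ∀ w, proxObjective A g u p ≤ proxObjective A g u w) {a : ℝ} (ha : g p = a)
    (w : ι → ℝ) :
    proxObjective A g u p + ((1 / 2 * ((w - p) ⬝ᵥ A *ᵥ (w - p)) : ℝ) : EReal)
      ≤ proxObjective A g u w := by
  unfold proxObjective at *
  induction hw : g w using EReal.rec with
  | bot => exact absurd hw (hbot w)
  | top => rw [EReal.coe_add_top]; exact le_top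
  | coe b =>
  rw [ha, ← EReal.coe_add, ← EReal.coe_add, ← EReal.coe_add, EReal.coe_le_coe_iff]
  -- Compare `p` with `t • w + (1 - t) • p` and let `t → 0`.
  refine le_of_forall_le_add_mul (c := 1 / 2 * ((w - p) ⬝ᵥ A *ᵥ (w - p))) fun t ht₀ ht₁ => ?_
  have hmin := (hp (t • w + (1 - t) • p)).trans
    (add_le_add le_rfl (hg.le_coe hw ha ht₀.le ht₁))
  rw [ha, ← EReal.coe_add, ← EReal.coe_add, EReal.coe_le_coe_iff,
    show t • w + (1 - t) • p - u = t • (w - u) + (1 - t) • (p - u) by module,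
    hA.convexComb_dotProduct_mulVec, show w - u - (p - u) = w - p by abel] at hmin
  nlinarith

theorem eq_of_forall_proxObjective_le (hA : A.PosDef) (hg : EConvex g) (hbot : ∀ w, g w ≠ ⊥)
    {w₀ : ι → ℝ} (hw₀ : g w₀ ≠ ⊤) {p' : ι → ℝ}
    (hp : ∀ w, proxObjective A g u p ≤ proxObjective A g u w)
    (hp' : ∀ w, proxObjective A g u p' ≤ proxObjective A g u w) : p' = p := by
  lift g p to ℝ using ⟨ne_top_of_forall_proxObjective_le hp hw₀, hbot p⟩ with a ha
  have h := (proxObjective_add_le hA.isHermitian hg hbot hp ha.symm p').trans (hp' p)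
  rw [proxObjective, ← ha, ← EReal.coe_add, ← EReal.coe_add, EReal.coe_le_coe_iff] at h
  by_contra hne
  have hpos := hA.dotProduct_mulVec_pos (sub_ne_zero.mpr hne)
  rw [star_trivial] at hpos
  linarith

theorem coe_add_dotProduct_le_of_forall_proxObjective_le (hA : A.IsHermitian) (hg : EConvex g)
    (hbot : ∀ w, g w ≠ ⊥) (hp : ∀ w, proxObjective A g u p ≤ proxObjective A g u w) {a : ℝ}
    (ha : g p = a) (w : ι → ℝ) : ((a + (A *ᵥ (u - p)) ⬝ᵥ (w - p) : ℝ) : EReal) ≤ g w := by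
  induction hw : g w using EReal.rec with
  | bot => exact absurd hw (hbot w)
  | top => exact le_top
  | coe b =>
  have h := proxObjective_add_le hA hg hbot hp ha w
  rw [proxObjective, proxObjective, hw, ha, ← EReal.coe_add, ← EReal.coe_add, ← EReal.coe_add,
    EReal.coe_le_coe_iff, show w - u = (w - p) + (p - u) by abel,
    hA.add_dotProduct_mulVec_add] at h
  have hcross : (A *ᵥ (u - p)) ⬝ᵥ (w - p) = -((w - p) ⬝ᵥ A *ᵥ (p - u)) := by
    rw [dotProduct_comm, ← neg_sub p u, mulVec_neg, dotProduct_neg]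
  rw [EReal.coe_le_coe_iff]
  linarith

theorem forall_proxObjective_le_of_affine_minorant (hA : A.PosSemidef) {p q : ι → ℝ} {c : ℝ}
    (hminor : ∀ z, ((z ⬝ᵥ p - c : ℝ) : EReal) ≤ g z) (hq : g q = ((q ⬝ᵥ p - c : ℝ) : EReal))
    (hpq : A *ᵥ (q - u) = -p) (z : ι → ℝ) :
    proxObjective A g u q ≤ proxObjective A g u z := by
  have hquad : 1 / 2 * ((q - u) ⬝ᵥ A *ᵥ (q - u)) + (q ⬝ᵥ p - c)
      ≤ 1 / 2 * ((z - u) ⬝ᵥ A *ᵥ (z - u)) + (z ⬝ᵥ p - c) := by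
    have hnonneg := hA.dotProduct_mulVec_nonneg (z - q)
    rw [star_trivial] at hnonneg
    rw [show z - u = (z - q) + (q - u) by abel, hA.isHermitian.add_dotProduct_mulVec_add, hpq]
    simp only [dotProduct_neg]
    linarith [sub_dotProduct z q p]
  calc proxObjective A g u q
      = ((1 / 2 * ((q - u) ⬝ᵥ A *ᵥ (q - u)) + (q ⬝ᵥ p - c) : ℝ) : EReal) := by
        rw [proxObjective, hq, EReal.coe_add]
    _ ≤ ((1 / 2 * ((z - u) ⬝ᵥ A *ᵥ (z - u)) + (z ⬝ᵥ p - c) : ℝ) : EReal) :=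
        EReal.coe_le_coe_iff.mpr hquad
    _ ≤ proxObjective A g u z := by
        rw [EReal.coe_add]
        exact add_le_add le_rfl (hminor z)

end ProxObjective

theorem stmt_10_general (m : ℕ) (A : Matrix (Fin m) (Fin m) ℝ) (hA : A.PosDef)
    (f : (Fin m → ℝ) → EReal)
    (hproper : ∃ w, f w ≠ ⊤) (hnbot : ∀ w, f w ≠ ⊥)
    (hconv : ∀ w₁ w₂ : Fin m → ℝ, ∀ t : ℝ, 0 ≤ t → t ≤ 1 →
      f (t • w₁ + (1 - t) • w₂) ≤ (t : EReal) * f w₁ + ((1 - t : ℝ) : EReal) * f w₂)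
    (hlsc : LowerSemicontinuous f) (v : Fin m → ℝ) :
    ∃ p q : Fin m → ℝ,
      (∀ w : Fin m → ℝ,
        (((1 / 2 * ((p - v) ⬝ᵥ A.mulVec (p - v)) : ℝ)) : EReal) + f p
          ≤ (((1 / 2 * ((w - v) ⬝ᵥ A.mulVec (w - v)) : ℝ)) : EReal) + f w) ∧
      (∀ p' : Fin m → ℝ,
        (∀ w : Fin m → ℝ,
          (((1 / 2 * ((p' - v) ⬝ᵥ A.mulVec (p' - v)) : ℝ)) : EReal) + f p'
            ≤ (((1 / 2 * ((w - v) ⬝ᵥ A.mulVec (w - v)) : ℝ)) : EReal) + f w) → p' = p) ∧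
      (∀ w : Fin m → ℝ,
        (((1 / 2 * ((q - A.mulVec v) ⬝ᵥ A⁻¹.mulVec (q - A.mulVec v)) : ℝ)) : EReal)
            + fenchelConj f q
          ≤ (((1 / 2 * ((w - A.mulVec v) ⬝ᵥ A⁻¹.mulVec (w - A.mulVec v)) : ℝ)) : EReal)
            + fenchelConj f w) ∧
      (∀ q' : Fin m → ℝ,
        (∀ w : Fin m → ℝ,
          (((1 / 2 * ((q' - A.mulVec v) ⬝ᵥ A⁻¹.mulVec (q' - A.mulVec v)) : ℝ)) : EReal)
              + fenchelConj f q'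
            ≤ (((1 / 2 * ((w - A.mulVec v) ⬝ᵥ A⁻¹.mulVec (w - A.mulVec v)) : ℝ)) : EReal)
              + fenchelConj f w) → q' = q) ∧
      v = p + A⁻¹.mulVec q := by
  obtain ⟨w₀, hw₀⟩ := hproper
  obtain ⟨C, M, hM, hlb⟩ := EConvex.exists_sub_mul_norm_le hconv hnbot hlsc hw₀
  obtain ⟨p, hp⟩ := exists_forall_proxObjective_le hA hlsc hM hlb hw₀ v
  lift f p to ℝ using ⟨ne_top_of_forall_proxObjective_le hp hw₀, hnbot p⟩ with a ha
  have hinv : ∀ x, A⁻¹ *ᵥ (A *ᵥ x) = x := fun x => by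
    rw [mulVec_mulVec, nonsing_inv_mul A ((isUnit_iff_isUnit_det A).mp hA.isUnit), one_mulVec]
  set q := A *ᵥ (v - p)
  have hq : fenchelConj f q = ((q ⬝ᵥ p - a : ℝ) : EReal) := fenchelConj_eq_of_subgradient ha.symm
    (coe_add_dotProduct_le_of_forall_proxObjective_le hA.isHermitian hconv hnbot hp ha.symm)
  have hdual : ∀ z, proxObjective A⁻¹ (fenchelConj f) (A *ᵥ v) q
      ≤ proxObjective A⁻¹ (fenchelConj f) (A *ᵥ v) z :=
    forall_proxObjective_le_of_affine_minorant hA.inv.posSemidef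
      (fun z => by simpa [← ha] using le_fenchelConj (f := f) z p) hq
      (by rw [← mulVec_sub, hinv, sub_sub_cancel_left])
  refine ⟨p, q, hp, fun p' hp' => eq_of_forall_proxObjective_le hA hconv hnbot hw₀ hp hp', hdual,
    fun q' hq' => eq_of_forall_proxObjective_le hA.inv (econvex_fenchelConj hnbot)
      (fenchelConj_ne_bot ha.symm) (hq ▸ EReal.coe_ne_top _) hdual hq', ?_⟩
  rw [hinv, add_sub_cancel]

/-- Generalized Moreau identity: for a symmetric positive definite matrix `A`
and a proper convex lower semicontinuous `f : ℝ^m → ℝ ∪ {+∞}`, the problems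
`min_w ½(w−v)ᵀA(w−v) + f(w)` and `min_w ½(w−Av)ᵀA⁻¹(w−Av) + f*(w)` have unique
minimizers `p` and `q`, which satisfy `v = p + A⁻¹ q`. -/
theorem stmt_10 (m : ℕ) (hm : 1 ≤ m) (A : Matrix (Fin m) (Fin m) ℝ) (hA : A.PosDef)
    (f : (Fin m → ℝ) → EReal)
    (hproper : ∃ w, f w ≠ ⊤) (hnbot : ∀ w, f w ≠ ⊥)
    (hconv : ∀ w₁ w₂ : Fin m → ℝ, ∀ t : ℝ, 0 ≤ t → t ≤ 1 →
      f (t • w₁ + (1 - t) • w₂) ≤ (t : EReal) * f w₁ + ((1 - t : ℝ) : EReal) * f w₂)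
    (hlsc : LowerSemicontinuous f) (v : Fin m → ℝ) :
    ∃ p q : Fin m → ℝ,
      (∀ w : Fin m → ℝ,
        (((1 / 2 * ((p - v) ⬝ᵥ A.mulVec (p - v)) : ℝ)) : EReal) + f p
          ≤ (((1 / 2 * ((w - v) ⬝ᵥ A.mulVec (w - v)) : ℝ)) : EReal) + f w) ∧
      (∀ p' : Fin m → ℝ,
        (∀ w : Fin m → ℝ,
          (((1 / 2 * ((p' - v) ⬝ᵥ A.mulVec (p' - v)) : ℝ)) : EReal) + f p'
            ≤ (((1 / 2 * ((w - v) ⬝ᵥ A.mulVec (w - v)) : ℝ)) : EReal) + f w) → p' = p) ∧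
      (∀ w : Fin m → ℝ,
        (((1 / 2 * ((q - A.mulVec v) ⬝ᵥ A⁻¹.mulVec (q - A.mulVec v)) : ℝ)) : EReal)
            + fenchelConj f q
          ≤ (((1 / 2 * ((w - A.mulVec v) ⬝ᵥ A⁻¹.mulVec (w - A.mulVec v)) : ℝ)) : EReal)
            + fenchelConj f w) ∧
      (∀ q' : Fin m → ℝ,
        (∀ w : Fin m → ℝ,
          (((1 / 2 * ((q' - A.mulVec v) ⬝ᵥ A⁻¹.mulVec (q' - A.mulVec v)) : ℝ)) : EReal)
              + fenchelConj f q'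
            ≤ (((1 / 2 * ((w - A.mulVec v) ⬝ᵥ A⁻¹.mulVec (w - A.mulVec v)) : ℝ)) : EReal)
              + fenchelConj f w) → q' = q) ∧
      v = p + A⁻¹.mulVec q :=
  stmt_10_general m A hA f hproper hnbot hconv hlsc v
end

section
/- Let m ≥ 1, let r₁, …, r_m > 0 and v₁, …, v_m ∈ ℝ, and define f : ℝ → ℝ by f(t) = t + (1/2) Σ_{i : r_i v_i ≤ t} (1/r_i) (t − r_i v_i)². Then f is convex and continuously differentiable on ℝ, with derivative f'(t) = 1 + Σ_{i : r_i v_i ≤ t} ( t/r_i − v_i ) for every t ∈ ℝ. -/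
/-!
Writing `(t - c)₊ = max (t - c) 0`, each summand of `f` is `(1/rᵢ) (t - rᵢvᵢ)₊²`, and
`y ↦ y₊²` is differentiable with derivative `2 y₊`: away from `0` it is locally `0` or `y²`,
and at `0` the derivative extends continuously. Hence `f' = 1 + Σᵢ (1/rᵢ)(t - rᵢvᵢ)₊`, which is
continuous and, since `rᵢ > 0`, monotone; a differentiable function with monotone derivative
is convex.
-/

open Finset

theorem hasDerivAt_max_zero_sq (x : ℝ) :
    HasDerivAt (fun y : ℝ => max y 0 ^ 2) (2 * max x 0) x := by
  refine hasDerivAt_of_hasDerivAt_of_ne' (x := 0) (g := fun y => 2 * max y 0) (fun y hy => ?_)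
    (by fun_prop) (by fun_prop) x
  rcases hy.lt_or_gt with hneg | hpos
  · have hzero : (fun y : ℝ => max y 0 ^ 2) =ᶠ[nhds y] fun _ => 0 := by
      filter_upwards [Iio_mem_nhds hneg] with z hz
      simp [max_eq_right (Set.mem_Iio.mp hz).le]
    simpa [max_eq_right hneg.le] using (hasDerivAt_const y (0 : ℝ)).congr_of_eventuallyEq hzero
  · have hsq : (fun y : ℝ => max y 0 ^ 2) =ᶠ[nhds y] fun z => z ^ 2 := by
      filter_upwards [Ioi_mem_nhds hpos] with z hz
      simp [max_eq_left (Set.mem_Ioi.mp hz).le]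
    simpa [max_eq_left hpos.le] using (hasDerivAt_pow 2 y).congr_of_eventuallyEq hsq

theorem hasDerivAt_sum_mul_max_sub_sq {ι : Type*} [Fintype ι] (w c : ι → ℝ) (t : ℝ) :
    HasDerivAt (fun t => ∑ i, w i * max (t - c i) 0 ^ 2)
      (∑ i, w i * (2 * max (t - c i) 0)) t := by
  refine HasDerivAt.fun_sum fun i _ => HasDerivAt.const_mul (w i) ?_
  simpa [Function.comp_def] using
    (hasDerivAt_max_zero_sq (t - c i)).comp t ((hasDerivAt_id t).sub_const (c i))

theorem monotone_sum_mul_max_sub {ι : Type*} [Fintype ι] {w : ι → ℝ} (hw : ∀ i, 0 ≤ w i)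
    (c : ι → ℝ) : Monotone fun t => ∑ i, w i * max (t - c i) 0 := fun _ _ hst =>
  sum_le_sum fun i _ =>
    mul_le_mul_of_nonneg_left (max_le_max (sub_le_sub_right hst _) le_rfl) (hw i)

theorem ite_le_mul_sub_sq_eq (a c t : ℝ) :
    (if c ≤ t then a * (t - c) ^ 2 else 0) = a * max (t - c) 0 ^ 2 := by
  split_ifs with h
  · rw [max_eq_left (sub_nonneg.mpr h)]
  · rw [max_eq_right (sub_nonpos.mpr (not_le.mp h).le)]
    ring

theorem ite_le_div_sub_eq {r : ℝ} (hr : r ≠ 0) (v t : ℝ) :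
    (if r * v ≤ t then t / r - v else 0) = 1 / r * max (t - r * v) 0 := by
  split_ifs with h
  · rw [max_eq_left (sub_nonneg.mpr h)]
    field_simp
  · rw [max_eq_right (sub_nonpos.mpr (not_le.mp h).le), mul_zero]

theorem stmt_13_general (m : ℕ) (r v : Fin m → ℝ) (hr : ∀ i, 0 < r i) :
    ConvexOn ℝ Set.univ (fun t : ℝ =>
      t + (1 / 2) * ∑ i, if r i * v i ≤ t then (1 / r i) * (t - r i * v i) ^ 2 else 0) ∧
    (∀ t : ℝ, HasDerivAt (fun t : ℝ =>
        t + (1 / 2) * ∑ i, if r i * v i ≤ t then (1 / r i) * (t - r i * v i) ^ 2 else 0)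
      (1 + ∑ i, if r i * v i ≤ t then t / r i - v i else 0) t) ∧
    Continuous (fun t : ℝ => 1 + ∑ i, if r i * v i ≤ t then t / r i - v i else 0) := by
  simp only [ite_le_mul_sub_sq_eq, fun i => ite_le_div_sub_eq (hr i).ne']
  have hderiv : ∀ t : ℝ, HasDerivAt
      (fun t => t + 1 / 2 * ∑ i, 1 / r i * max (t - r i * v i) 0 ^ 2)
      (1 + ∑ i, 1 / r i * max (t - r i * v i) 0) t := fun t => by
    refine ((hasDerivAt_id t).add
      ((hasDerivAt_sum_mul_max_sub_sq (fun i => 1 / r i) (fun i => r i * v i) t).const_mul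
        (1 / 2))).congr_deriv ?_
    rw [mul_sum]
    exact congrArg (1 + ·) (sum_congr rfl fun i _ => by ring)
  have hmono := (monotone_sum_mul_max_sub (fun i => (one_div_pos.mpr (hr i)).le)
    fun i => r i * v i).const_add 1
  refine ⟨?_, hderiv, by fun_prop⟩
  refine Monotone.convexOn_univ_of_deriv (fun t => (hderiv t).differentiableAt) ?_
  rwa [funext fun t => (hderiv t).deriv]

/-- The one-dimensional dual reduction
`f(t) = t + ½ Σ_{i : rᵢvᵢ ≤ t} (1/rᵢ)(t − rᵢvᵢ)²` arising in the weighted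
projection onto the probability simplex is convex and continuously
differentiable, with derivative `f'(t) = 1 + Σ_{i : rᵢvᵢ ≤ t} (t/rᵢ − vᵢ)`. -/
theorem stmt_13 (m : ℕ) (hm : 1 ≤ m) (r v : Fin m → ℝ) (hr : ∀ i, 0 < r i) :
    ConvexOn ℝ Set.univ (fun t : ℝ =>
      t + (1 / 2) * ∑ i, if r i * v i ≤ t then (1 / r i) * (t - r i * v i) ^ 2 else 0) ∧
    (∀ t : ℝ, HasDerivAt (fun t : ℝ =>
        t + (1 / 2) * ∑ i, if r i * v i ≤ t then (1 / r i) * (t - r i * v i) ^ 2 else 0)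
      (1 + ∑ i, if r i * v i ≤ t then t / r i - v i else 0) t) ∧
    Continuous (fun t : ℝ => 1 + ∑ i, if r i * v i ≤ t then t / r i - v i else 0) :=
  stmt_13_general m r v hr
end

section
/- Let m ≥ 2, let r₁, …, r_m > 0 and v₁, …, v_m ∈ ℝ, and let Δ = { w ∈ ℝ^m : w_i ≥ 0 for all i and Σ_i w_i = 1 }. Let j₁, …, j_m be a permutation of {1, …, m} such that r_{j₁} v_{j₁} ≤ … ≤ r_{j_m} v_{j_m}, and for i ∈ {1, …, m−1} define t_i = ( Σ_{k=i+1}^m v_{j_k} − 1 ) / ( Σ_{k=i+1}^m 1/r_{j_k} ). Suppose k ∈ {1, …, m−1} satisfies r_{j_k} v_{j_k} ≤ t_k ≤ r_{j_{k+1}} v_{j_{k+1}}, and set t̃ = t_k and w_i = max(0, v_i − t̃/r_i) for i = 1, …, m. Then w = (w₁, …, w_m) lies in Δ and is the unique minimizer over Δ of the weighted quadratic u ↦ (1/2) Σ_{i=1}^m r_i (u_i − v_i)². -/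
/-!
With `g i = r i * (w i - v i)` the gradient of the objective at `w`, the threshold vector
`w i = max 0 (v i - t / r i)` satisfies `g i = -min (r i * v i) t`: every `g i` is at least `-t`, with
equality wherever `w i > 0`. These are the KKT conditions of the simplex constraint with multiplier `t`,
and they give the variational inequality `0 ≤ Σ g i (u i - w i)` for every `u` in the simplex. Expanding
the square then yields `Σ r (u - v)² ≥ Σ r (w - v)² + Σ r (u - w)²`, i.e. minimality and uniqueness.
The sorting hypothesis only serves to show `Σ w i = 1`: it makes `w` vanish at `j 0, …, j (k - 1)`
and equal `v i - t / r i` at the remaining coordinates, and `t` is the value that makes those sum to `1`.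
-/

open Finset

section Threshold

variable {r v t : ℝ}

lemma max_zero_sub_div_eq_sub_div (hr : 0 < r) (h : t ≤ r * v) :
    max 0 (v - t / r) = v - t / r :=
  max_eq_right <| sub_nonneg.2 <| (div_le_iff₀ hr).2 <| by linarith

lemma max_zero_sub_div_eq_zero_iff (hr : 0 < r) : max 0 (v - t / r) = 0 ↔ r * v ≤ t := by
  rw [max_eq_left_iff, sub_nonpos, le_div_iff₀ hr, mul_comm]

lemma mul_max_zero_sub_div_sub (hr : 0 < r) :
    r * (max 0 (v - t / r) - v) = -min (r * v) t := by
  rcases le_total (r * v) t with h | h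
  · rw [(max_zero_sub_div_eq_zero_iff hr).2 h, min_eq_left h]
    ring
  · rw [max_zero_sub_div_eq_sub_div hr h, min_eq_right h]
    field_simp
    ring

end Threshold

section Simplex

variable {ι : Type*} [Fintype ι]

lemma sum_max_zero_sub_div_eq_one {r v : ι → ℝ} {t : ℝ} {s : Finset ι} (hr : ∀ i, 0 < r i)
    (hs : s.Nonempty) (hin : ∀ i ∈ s, t ≤ r i * v i) (hout : ∀ i ∉ s, r i * v i ≤ t)
    (ht : t = (∑ i ∈ s, v i - 1) / ∑ i ∈ s, 1 / r i) :
    ∑ i, max 0 (v i - t / r i) = 1 := by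
  have hpos : 0 < ∑ i ∈ s, 1 / r i := sum_pos (fun i _ => one_div_pos.2 (hr i)) hs
  calc ∑ i, max 0 (v i - t / r i)
      = ∑ i ∈ s, (v i - t * (1 / r i)) := by
        rw [← sum_subset (subset_univ s) fun i _ hi => (max_zero_sub_div_eq_zero_iff (hr i)).2
          (hout i hi)]
        refine sum_congr rfl fun i hi => ?_
        rw [max_zero_sub_div_eq_sub_div (hr i) (hin i hi), mul_one_div]
    _ = 1 := by
        rw [sum_sub_distrib, ← mul_sum, ht, div_mul_cancel₀ _ hpos.ne']
        ring

lemma sum_mul_sub_nonneg_of_kkt {g w u : ι → ℝ} {t : ℝ} (hw : ∑ i, w i = 1)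
    (hu : u ∈ stdSimplex ℝ ι) (hg : ∀ i, -t ≤ g i) (hslack : ∀ i, w i ≠ 0 → g i = -t) :
    0 ≤ ∑ i, g i * (u i - w i) := by
  have hterm : ∀ i, -t * (u i - w i) ≤ g i * (u i - w i) := fun i => by
    by_cases hwi : w i = 0
    · rw [hwi, sub_zero]
      exact mul_le_mul_of_nonneg_right (hg i) (hu.1 i)
    · rw [hslack i hwi]
  calc (0 : ℝ) = ∑ i, -t * (u i - w i) := by rw [← mul_sum, sum_sub_distrib, hu.2, hw]; ring
    _ ≤ ∑ i, g i * (u i - w i) := sum_le_sum fun i _ => hterm i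

variable {r v w u : ι → ℝ}

lemma sum_mul_sq_sub_add_le (h : 0 ≤ ∑ i, r i * (w i - v i) * (u i - w i)) :
    ∑ i, r i * (w i - v i) ^ 2 + ∑ i, r i * (u i - w i) ^ 2 ≤ ∑ i, r i * (u i - v i) ^ 2 := by
  have hexpand : ∑ i, r i * (u i - v i) ^ 2 = ∑ i, r i * (w i - v i) ^ 2
      + ∑ i, r i * (u i - w i) ^ 2 + 2 * ∑ i, r i * (w i - v i) * (u i - w i) := by
    rw [mul_sum, ← sum_add_distrib, ← sum_add_distrib]
    exact sum_congr rfl fun i _ => by ring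
  linarith

lemma eq_of_sum_mul_sq_sub_eq_zero (hr : ∀ i, 0 < r i) (h : ∑ i, r i * (u i - w i) ^ 2 = 0) :
    u = w := by
  funext i
  have hi := (sum_eq_zero_iff_of_nonneg fun i _ => mul_nonneg (hr i).le (sq_nonneg (u i - w i))).1
    h i (mem_univ i)
  simpa [(hr i).ne', sub_eq_zero] using hi

end Simplex

/-- Weighted projection onto the probability simplex: with weights `rᵢ > 0`, a
sorting permutation `j` of the values `rᵢvᵢ`, the threshold
`t = (Σ_{k+1..m} v_{j_k} − 1)/(Σ_{k+1..m} 1/r_{j_k})` (indices one-based)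
pinned by `r_{j_k}v_{j_k} ≤ t ≤ r_{j_{k+1}}v_{j_{k+1}}`, the vector
`wᵢ = max(0, vᵢ − t/rᵢ)` is the unique minimizer over the simplex of
`u ↦ ½ Σᵢ rᵢ(uᵢ − vᵢ)²`. -/
theorem stmt_14 (m : ℕ) (r v : Fin m → ℝ) (hr : ∀ i, 0 < r i)
    (j : Equiv.Perm (Fin m))
    (hsorted : Monotone fun i => r (j i) * v (j i))
    (k : ℕ) (hk1 : 1 ≤ k) (hk2 : k ≤ m - 1)
    (t : ℝ)
    (ht : t = ((∑ i : Fin m, if k ≤ (i : ℕ) then v (j i) else 0) - 1)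
            / (∑ i : Fin m, if k ≤ (i : ℕ) then 1 / r (j i) else 0))
    (hlo : r (j ⟨k - 1, by omega⟩) * v (j ⟨k - 1, by omega⟩) ≤ t)
    (hhi : t ≤ r (j ⟨k, by omega⟩) * v (j ⟨k, by omega⟩))
    (w : Fin m → ℝ) (hw : ∀ i, w i = max 0 (v i - t / r i)) :
    w ∈ stdSimplex ℝ (Fin m) ∧
    (∀ u ∈ stdSimplex ℝ (Fin m),
      (1 / 2) * ∑ i, r i * (w i - v i) ^ 2 ≤ (1 / 2) * ∑ i, r i * (u i - v i) ^ 2) ∧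
    (∀ u ∈ stdSimplex ℝ (Fin m),
      (1 / 2) * ∑ i, r i * (u i - v i) ^ 2 = (1 / 2) * ∑ i, r i * (w i - v i) ^ 2 →
      u = w) := by
  obtain rfl : w = fun i => max 0 (v i - t / r i) := funext hw
  have hsum : ∑ i, max 0 (v i - t / r i) = 1 := by
    rw [← Equiv.sum_comp j]
    refine sum_max_zero_sub_div_eq_one (r := r ∘ j) (v := v ∘ j) (s := {i | k ≤ (i : ℕ)})
      (fun i => hr (j i)) ⟨⟨k, by omega⟩, by simp⟩ (fun i hi => hhi.trans (hsorted ?_))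
      (fun i hi => (hsorted ?_).trans hlo) (by simpa only [sum_filter, Function.comp_apply] using ht)
    · simpa [Fin.le_def] using hi
    · simp only [mem_filter, mem_univ, true_and, not_le] at hi
      exact Fin.le_def.2 (show (i : ℕ) ≤ k - 1 by omega)
  have hvar : ∀ u ∈ stdSimplex ℝ (Fin m),
      0 ≤ ∑ i, r i * (max 0 (v i - t / r i) - v i) * (u i - max 0 (v i - t / r i)) := by
    refine fun u hu => sum_mul_sub_nonneg_of_kkt (t := t) hsum hu (fun i => ?_) fun i hi => ?_
    · rw [mul_max_zero_sub_div_sub (hr i)]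
      exact neg_le_neg (min_le_right _ _)
    · rw [Ne, max_zero_sub_div_eq_zero_iff (hr i), not_le] at hi
      rw [mul_max_zero_sub_div_sub (hr i), min_eq_right hi.le]
  have hdist_nonneg : ∀ u : Fin m → ℝ, 0 ≤ ∑ i, r i * (u i - max 0 (v i - t / r i)) ^ 2 :=
    fun u => sum_nonneg fun i _ => mul_nonneg (hr i).le (sq_nonneg _)
  refine ⟨⟨fun i => le_max_left _ _, hsum⟩, fun u hu => ?_, fun u hu heq => ?_⟩
  · linarith [sum_mul_sq_sub_add_le (hvar u hu), hdist_nonneg u]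
  · refine eq_of_sum_mul_sq_sub_eq_zero hr (le_antisymm ?_ (hdist_nonneg u))
    linarith [sum_mul_sq_sub_add_le (hvar u hu)]
end
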